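/- arXiv:2010.15897 — 6 statements merged into one kernel-verified Lean document; each statement's English description precedes it below -/
import Mathlib

section
/- Let k be a field of characteristic different from 2 and let L be a finite-dimensional simple Lie algebra over k generated by its pure extremal elements. Suppose a ∈ L is ad-nilpotent of index 3 (that is, (ad_a)³ = 0 and (ad_a)² ≠ 0) and satisfies: (i) a belongs to the image of (ad_a)² : L → L, and (ii) for every x ∈ L the equality (ad_{⁅a,⁅a,x⁆⁆})² = (ad_a)² ∘ (ad_x)² ∘ (ad_a)² holds as linear endomorphisms of L. Then the inner ideal I_a of L generated by a (the intersection of all inner ideals of L containing a) is spanned as a k-vector space by the extremal elements of L that it contains. -/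
/-- A `k`-subspace `I` of a Lie algebra `L` is an inner ideal if
`⁅x, ⁅y, z⁆⁆ ∈ I` for all `x, y ∈ I` and `z ∈ L`. -/
def IsInnerIdeal (k : Type*) {L : Type*} [Field k] [LieRing L] [LieAlgebra k L]
    (I : Submodule k L) : Prop :=
  ∀ x ∈ I, ∀ y ∈ I, ∀ z : L, ⁅x, ⁅y, z⁆⁆ ∈ I

/-- `x` is extremal: `x ≠ 0` and `⁅x, ⁅x, z⁆⁆ ∈ k·x` for all `z`. -/
def IsExtremal (k : Type*) {L : Type*} [Field k] [LieRing L] [LieAlgebra k L] (x : L) : Prop :=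
  x ≠ 0 ∧ ∀ z : L, ⁅x, ⁅x, z⁆⁆ ∈ Submodule.span k ({x} : Set L)

/-- `x` is a sandwich: `⁅x, ⁅x, z⁆⁆ = 0` for all `z`. -/
def IsSandwich {L : Type*} [LieRing L] (x : L) : Prop :=
  ∀ z : L, ⁅x, ⁅x, z⁆⁆ = 0

/-- `x` is pure extremal: extremal but not a sandwich. -/
def IsPureExtremal (k : Type*) {L : Type*} [Field k] [LieRing L] [LieAlgebra k L] (x : L) : Prop :=
  IsExtremal k x ∧ ¬ IsSandwich x

/-- The smallest inner ideal containing `a`: the intersection of all inner ideals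
containing `a`. -/
def innerIdealGenerated (k : Type*) {L : Type*} [Field k] [LieRing L] [LieAlgebra k L]
    (a : L) : Submodule k L :=
  sInf {I : Submodule k L | IsInnerIdeal k I ∧ a ∈ I}

theorem endkey {R : Type*} [Ring R] (A P X B : R) (h3 : A^3 = 0)
    (hB : B = A * (A * X - X * A) - (A * X - X * A) * A)
    (hAB : A * B + B * A = A^2 * (P * X + X * P) * A^2) :
    A^2 * X * A^2 = 0 := by
  have h1 : A^2 * B + A * B * A + A^2 * X * A^2
      = A * A^3 * X - A^3 * (X * A) + A * X * A^3 := by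
    rw [hB]; noncomm_ring
  have h2 : A^2 * B + A * B * A = A * (A * B + B * A) := by noncomm_ring
  rw [h3] at h1
  rw [hAB] at h2
  have h4 : A * (A ^ 2 * (P * X + X * P) * A ^ 2) = A^3 * ((P * X + X * P) * A^2) := by
    noncomm_ring
  rw [h4, h3, zero_mul] at h2
  rw [h2] at h1
  simpa using h1


section
variable {k L : Type*} [Field k] [LieRing L] [LieAlgebra k L]
attribute [local instance] LieRing.ofAssociativeRing

local notation "ad" => LieAlgebra.ad k L

lemma a2lie (a x : L) : ((ad a)^2) x = ⁅a, ⁅a, x⁆⁆ := by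
  simp [pow_two, Module.End.mul_apply, LieAlgebra.ad_apply]

lemma Bform (a x : L) : ad ⁅a, ⁅a, x⁆⁆ =
    (ad a) * ((ad a) * (ad x) - (ad x) * (ad a)) -
      ((ad a) * (ad x) - (ad x) * (ad a)) * (ad a) := by
  rw [LieHom.map_lie, LieHom.map_lie, Ring.lie_def, Ring.lie_def]

lemma hpol (a : L)
    (hii : ∀ x : L, (ad ⁅a, ⁅a, x⁆⁆) ^ 2 = (ad a) ^ 2 * (ad x) ^ 2 * (ad a) ^ 2)
    (u v : L) :
    (ad ⁅a, ⁅a, u⁆⁆) * (ad ⁅a, ⁅a, v⁆⁆) + (ad ⁅a, ⁅a, v⁆⁆) * (ad ⁅a, ⁅a, u⁆⁆)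
      = (ad a)^2 * ((ad u) * (ad v) + (ad v) * (ad u)) * (ad a)^2 := by
  have h := hii (u + v)
  have hsum : (⁅a, ⁅a, u + v⁆⁆ : L) = ⁅a, ⁅a, u⁆⁆ + ⁅a, ⁅a, v⁆⁆ := by
    rw [lie_add, lie_add]
  rw [hsum, map_add] at h
  have haduv : ad (u + v) = ad u + ad v := map_add _ _ _
  rw [haduv] at h
  set Bu := ad ⁅a, ⁅a, u⁆⁆
  set Bv := ad ⁅a, ⁅a, v⁆⁆
  have e1 : (Bu + Bv)^2 = Bu^2 + (Bu * Bv + Bv * Bu) + Bv^2 := by noncomm_ring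
  have e2 : (ad a)^2 * ((ad u) + (ad v))^2 * (ad a)^2
      = (ad a)^2 * (ad u)^2 * (ad a)^2
        + (ad a)^2 * ((ad u) * (ad v) + (ad v) * (ad u)) * (ad a)^2
        + (ad a)^2 * (ad v)^2 * (ad a)^2 := by noncomm_ring
  rw [e1, e2, ← hii u, ← hii v] at h
  have := add_right_cancel h
  exact add_left_cancel this

lemma opkey (a : L)
    (hnil3 : (ad a) ^ 3 = 0)
    (hi : a ∈ LinearMap.range ((ad a) ^ 2))
    (hii : ∀ x : L, (ad ⁅a, ⁅a, x⁆⁆) ^ 2 = (ad a) ^ 2 * (ad x) ^ 2 * (ad a) ^ 2)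
    (x : L) : (ad a)^2 * (ad x) * (ad a)^2 = 0 := by
  obtain ⟨p, hp⟩ := hi
  have hpa : (⁅a, ⁅a, p⁆⁆ : L) = a := (a2lie (k := k) a p).symm.trans hp
  have hE : ad ⁅a, ⁅a, p⁆⁆ = ad a := by rw [hpa]
  have h := hpol a hii p x
  rw [hE] at h
  exact endkey (ad a) (ad p) (ad x) (ad ⁅a, ⁅a, x⁆⁆) hnil3 (Bform a x) h


lemma abelianI (a : L)
    (hnil3 : (ad a) ^ 3 = 0)
    (hi : a ∈ LinearMap.range ((ad a) ^ 2))
    (hii : ∀ x : L, (ad ⁅a, ⁅a, x⁆⁆) ^ 2 = (ad a) ^ 2 * (ad x) ^ 2 * (ad a) ^ 2)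
    (u v : L) : (⁅((ad a)^2) u, ((ad a)^2) v⁆ : L) = 0 := by
  have hku := opkey a hnil3 hi hii u
  have h3v : (ad a) (((ad a)^2) v) = 0 := by
    have : ((ad a)^3) v = 0 := by rw [hnil3]; rfl
    rw [pow_succ'] at this
    exact this
  have hBu := Bform (k := k) a u
  calc (⁅((ad a)^2) u, ((ad a)^2) v⁆ : L)
      = (ad ⁅a, ⁅a, u⁆⁆) (((ad a)^2) v) := by
        rw [LieAlgebra.ad_apply, a2lie]
    _ = 0 := by
        rw [hBu]
        simp only [LinearMap.sub_apply, Module.End.mul_apply, h3v, map_zero]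
        have : (ad u) (((ad a)^2) v) = ((ad u) * (ad a)^2) v := rfl
        rw [this]
        rw [sub_zero, sub_zero]
        have h2 : (ad a) ((ad a) (((ad u) * (ad a)^2) v)) = ((ad a)^2 * (ad u) * (ad a)^2) v := rfl
        rw [h2, hku]
        rfl


lemma lieSwap (a : L)
    (hnil3 : (ad a) ^ 3 = 0)
    (hi : a ∈ LinearMap.range ((ad a) ^ 2))
    (hii : ∀ x : L, (ad ⁅a, ⁅a, x⁆⁆) ^ 2 = (ad a) ^ 2 * (ad x) ^ 2 * (ad a) ^ 2)
    (u v z : L) :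
    (⁅((ad a)^2) v, ⁅((ad a)^2) u, z⁆⁆ : L) = ⁅((ad a)^2) u, ⁅((ad a)^2) v, z⁆⁆ := by
  have hab := abelianI a hnil3 hi hii u v
  have h := lie_lie (((ad a)^2) u) (((ad a)^2) v) z
  rw [hab, zero_lie] at h
  have := sub_eq_zero.mp h.symm
  exact this.symm

lemma innerKey (a : L)
    (hii : ∀ x : L, (ad ⁅a, ⁅a, x⁆⁆) ^ 2 = (ad a) ^ 2 * (ad x) ^ 2 * (ad a) ^ 2)
    (u v z : L) :
    (⁅(⁅a, ⁅a, u⁆⁆ : L), ⁅(⁅a, ⁅a, v⁆⁆ : L), z⁆⁆ : L) + ⁅(⁅a, ⁅a, v⁆⁆ : L), ⁅(⁅a, ⁅a, u⁆⁆ : L), z⁆⁆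
      = ((ad a)^2) (((ad u) * (ad v) + (ad v) * (ad u)) (((ad a)^2) z)) := by
  have h := LinearMap.congr_fun (hpol a hii u v) z
  simpa only [LinearMap.add_apply, Module.End.mul_apply, LieAlgebra.ad_apply] using h

lemma rangeInner (hchar : (2 : k) ≠ 0) (a : L)
    (hnil3 : (ad a) ^ 3 = 0)
    (hi : a ∈ LinearMap.range ((ad a) ^ 2))
    (hii : ∀ x : L, (ad ⁅a, ⁅a, x⁆⁆) ^ 2 = (ad a) ^ 2 * (ad x) ^ 2 * (ad a) ^ 2) :
    IsInnerIdeal k (LinearMap.range ((ad a)^2)) := by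
  intro b hb c hc z
  obtain ⟨u, rfl⟩ := hb
  obtain ⟨v, rfl⟩ := hc
  have hswap := lieSwap a hnil3 hi hii u v z
  have hkey := innerKey a hii u v z
  rw [← a2lie (k := k) a u, ← a2lie (k := k) a v] at hkey
  rw [hswap] at hkey
  set w := (((ad u) * (ad v) + (ad v) * (ad u)) (((ad a)^2) z)) with hw
  have h2 : (2:k) • (⁅((ad a)^2) u, ⁅((ad a)^2) v, z⁆⁆ : L) = ((ad a)^2) w := by
    rw [two_smul]; exact hkey
  refine ⟨(2:k)⁻¹ • w, ?_⟩
  rw [map_smul, ← h2, smul_smul, inv_mul_cancel₀ hchar, one_smul]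

lemma IG_eq (hchar : (2 : k) ≠ 0) (a : L)
    (hnil3 : (ad a) ^ 3 = 0)
    (hi : a ∈ LinearMap.range ((ad a) ^ 2))
    (hii : ∀ x : L, (ad ⁅a, ⁅a, x⁆⁆) ^ 2 = (ad a) ^ 2 * (ad x) ^ 2 * (ad a) ^ 2) :
    innerIdealGenerated k a = LinearMap.range ((ad a)^2) := by
  apply le_antisymm
  · exact sInf_le ⟨rangeInner hchar a hnil3 hi hii, hi⟩
  · refine le_sInf ?_
    rintro J ⟨hJ, haJ⟩
    rintro w ⟨z, rfl⟩
    rw [a2lie]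
    exact hJ a haJ a haJ z

/-- pointwise exponential of `ad f` with coefficient `1/2` on the square term -/
noncomputable def expAd (k : Type*) {L : Type*} [Field k] [LieRing L] [LieAlgebra k L]
    (f z : L) : L := z + ⁅f, z⁆ + (2⁻¹ : k) • ⁅f, ⁅f, z⁆⁆

lemma span_bracket2 {f : L} (hf2 : ∀ z : L, ⁅f, ⁅f, z⁆⁆ ∈ Submodule.span k ({f} : Set L))
    (z : L) : ∃ μ : k, μ • f = ⁅f, ⁅f, z⁆⁆ :=
  Submodule.mem_span_singleton.mp (hf2 z)

lemma d3_zero {f : L} (hf2 : ∀ z : L, ⁅f, ⁅f, z⁆⁆ ∈ Submodule.span k ({f} : Set L))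
    (z : L) : (⁅f, ⁅f, ⁅f, z⁆⁆⁆ : L) = 0 := by
  obtain ⟨μ, hμ⟩ := span_bracket2 hf2 z
  rw [← hμ, lie_smul, lie_self, smul_zero]

lemma neg_lie_neg (f z : L) : (⁅(-f : L), ⁅-f, z⁆⁆ : L) = ⁅f, ⁅f, z⁆⁆ := by
  rw [neg_lie, neg_lie, lie_neg, neg_neg]

lemma expAd_neg_apply (f z : L) :
    expAd k (-f) z = z - ⁅f, z⁆ + (2⁻¹ : k) • ⁅f, ⁅f, z⁆⁆ := by
  rw [expAd, neg_lie_neg, neg_lie, sub_eq_add_neg]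

lemma neg_extremal_span {f : L} (hf2 : ∀ z : L, ⁅f, ⁅f, z⁆⁆ ∈ Submodule.span k ({f} : Set L))
    (z : L) : ⁅-f, ⁅-f, z⁆⁆ ∈ Submodule.span k ({-f} : Set L) := by
  rw [neg_lie_neg]
  obtain ⟨μ, hμ⟩ := span_bracket2 hf2 z
  exact Submodule.mem_span_singleton.mpr ⟨-μ, by rw [smul_neg, neg_smul, neg_neg, hμ]⟩

lemma expAd_left_inv (hchar : (2 : k) ≠ 0) {f : L}
    (hf2 : ∀ z : L, ⁅f, ⁅f, z⁆⁆ ∈ Submodule.span k ({f} : Set L))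
    (z : L) : expAd k (-f) (expAd k f z) = z := by
  have hc : (2⁻¹ : k) + 2⁻¹ = 1 := by
    rw [← two_mul, mul_inv_cancel₀ hchar]
  set c : k := (2⁻¹ : k) with hcdef
  rw [expAd_neg_apply]
  have h1 : (⁅f, z + ⁅f, z⁆ + c • ⁅f, ⁅f, z⁆⁆⁆ : L) = ⁅f, z⁆ + ⁅f, ⁅f, z⁆⁆ := by
    rw [lie_add, lie_add, lie_smul, d3_zero hf2, smul_zero, add_zero]
  have h2 : (⁅f, ⁅f, z + ⁅f, z⁆ + c • ⁅f, ⁅f, z⁆⁆⁆⁆ : L) = ⁅f, ⁅f, z⁆⁆ := by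
    rw [h1, lie_add, d3_zero hf2, add_zero]
  rw [expAd, h2, h1]
  have : c • (⁅f, ⁅f, z⁆⁆ : L) + c • ⁅f, ⁅f, z⁆⁆ = ⁅f, ⁅f, z⁆⁆ := by
    rw [← add_smul, hc, one_smul]
  abel_nf
  rw [show (2:ℤ) • (c • ⁅f, ⁅f, z⁆⁆ : L) = c • ⁅f, ⁅f, z⁆⁆ + c • ⁅f, ⁅f, z⁆⁆ from two_smul ℤ _, this]
  abel

lemma expAd_smul (f : L) (μ : k) (w : L) : expAd k f (μ • w) = μ • expAd k f w := by
  simp only [expAd, lie_smul, smul_comm μ ((2:k)⁻¹), smul_add]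

lemma expAd_zero (f : L) : expAd k f 0 = 0 := by
  simp [expAd]

lemma expAd_lie (hchar : (2 : k) ≠ 0) {f : L}
    (hf2 : ∀ z : L, ⁅f, ⁅f, z⁆⁆ ∈ Submodule.span k ({f} : Set L))
    (x y : L) : expAd k f ⁅x, y⁆ = ⁅expAd k f x, expAd k f y⁆ := by
  have hc : (2⁻¹ : k) + 2⁻¹ = 1 := by
    rw [← two_mul, mul_inv_cancel₀ hchar]
  set c : k := (2⁻¹ : k) with hcdef
  obtain ⟨μ, hμ⟩ := span_bracket2 hf2 x
  obtain ⟨ν, hν⟩ := span_bracket2 hf2 y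
  have e1 : (⁅f, ⁅x, y⁆⁆ : L) = ⁅⁅f, x⁆, y⁆ + ⁅x, ⁅f, y⁆⁆ := leibniz_lie f x y
  have e2 : (⁅f, ⁅f, ⁅x, y⁆⁆⁆ : L)
      = ⁅⁅f, ⁅f, x⁆⁆, y⁆ + ⁅⁅f, x⁆, ⁅f, y⁆⁆ + (⁅⁅f, x⁆, ⁅f, y⁆⁆ + ⁅x, ⁅f, ⁅f, y⁆⁆⁆) := by
    rw [e1, lie_add, leibniz_lie f ⁅f, x⁆ y, leibniz_lie f x ⁅f, y⁆]
  have c1 : (⁅⁅f, x⁆, ⁅f, ⁅f, y⁆⁆⁆ : L) = -((ν * μ) • f) := by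
    rw [← hν, lie_smul, ← lie_skew, ← hμ, smul_neg, smul_smul]
  have c2 : (⁅⁅f, ⁅f, x⁆⁆, ⁅f, y⁆⁆ : L) = (μ * ν) • f := by
    rw [← hμ, smul_lie, ← hν, smul_smul]
  have c3 : (⁅⁅f, ⁅f, x⁆⁆, ⁅f, ⁅f, y⁆⁆⁆ : L) = 0 := by
    rw [← hμ, ← hν, smul_lie, lie_smul, lie_self, smul_zero, smul_zero]
  rw [expAd, expAd, expAd, e2, e1]
  simp only [lie_add, add_lie, lie_smul, smul_lie, c1, c2, c3, smul_neg, smul_smul,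
    smul_zero, add_zero]
  match_scalars <;> field_simp <;> ring


lemma expAd_right_inv (hchar : (2 : k) ≠ 0) {f : L}
    (hf2 : ∀ z : L, ⁅f, ⁅f, z⁆⁆ ∈ Submodule.span k ({f} : Set L))
    (z : L) : expAd k f (expAd k (-f) z) = z := by
  have h := expAd_left_inv hchar (neg_extremal_span hf2) z
  rwa [neg_neg] at h

lemma expAd_extremal (hchar : (2 : k) ≠ 0) {f e : L}
    (hf : IsExtremal k f) (he : IsExtremal k e) : IsExtremal k (expAd k f e) := by
  constructor
  · intro h0
    have := expAd_left_inv hchar hf.2 e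
    rw [h0, expAd_zero] at this
    exact he.1 this.symm
  · intro z
    set w := expAd k (-f) z with hw
    have hz : expAd k f w = z := expAd_right_inv hchar hf.2 z
    obtain ⟨μ, hμ⟩ := Submodule.mem_span_singleton.mp (he.2 w)
    have : (⁅expAd k f e, ⁅expAd k f e, z⁆⁆ : L) = μ • expAd k f e := by
      rw [← hz, ← expAd_lie hchar hf.2, ← expAd_lie hchar hf.2, ← hμ, expAd_smul]
    rw [this]
    exact Submodule.mem_span_singleton.mpr ⟨μ, rfl⟩

lemma neg_isExtremal {f : L} (hf : IsExtremal k f) : IsExtremal k (-f) :=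
  ⟨neg_ne_zero.mpr hf.1, neg_extremal_span hf.2⟩

lemma lie_mem_spanE (hchar : (2 : k) ≠ 0) {f e : L}
    (hf : IsExtremal k f) (he : IsExtremal k e) :
    (⁅f, e⁆ : L) ∈ Submodule.span k {x : L | IsExtremal k x} := by
  set S := Submodule.span k {x : L | IsExtremal k x} with hS
  have h1 : expAd k f e ∈ S := Submodule.subset_span (expAd_extremal hchar hf he)
  have h2 : expAd k (-f) e ∈ S :=
    Submodule.subset_span (expAd_extremal hchar (neg_isExtremal hf) he)
  have hdiff : expAd k f e - expAd k (-f) e = (2 : k) • ⁅f, e⁆ := by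
    rw [expAd, expAd_neg_apply, two_smul]
    abel
  have : (⁅f, e⁆ : L) = (2 : k)⁻¹ • (expAd k f e - expAd k (-f) e) := by
    rw [hdiff, smul_smul, inv_mul_cancel₀ hchar, one_smul]
  rw [this]
  exact S.smul_mem _ (S.sub_mem h1 h2)


lemma spanE_top [LieAlgebra.IsSimple k L] (hchar : (2 : k) ≠ 0)
    (hgen : LieSubalgebra.lieSpan k L {x : L | IsPureExtremal k x} = ⊤) :
    Submodule.span k {x : L | IsExtremal k x} = ⊤ := by
  set S := Submodule.span k {x : L | IsExtremal k x} with hS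
  -- the stabilizer of S is a Lie subalgebra
  let M : LieSubalgebra k L :=
    { carrier := {z : L | ∀ v ∈ S, ⁅z, v⁆ ∈ S}
      add_mem' := fun {z1 z2} h1 h2 v hv => by
        rw [add_lie]; exact S.add_mem (h1 v hv) (h2 v hv)
      zero_mem' := fun v hv => by rw [zero_lie]; exact S.zero_mem
      smul_mem' := fun t z hz v hv => by rw [smul_lie]; exact S.smul_mem t (hz v hv)
      lie_mem' := fun {z1 z2} h1 h2 v hv => by
        rw [lie_lie]; exact S.sub_mem (h1 _ (h2 v hv)) (h2 _ (h1 v hv)) }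
  have hMpure : {x : L | IsPureExtremal k x} ⊆ (M : Set L) := by
    intro f hf
    intro v hv
    have hfE : IsExtremal k f := hf.1
    have hle : S ≤ Submodule.comap ((LieAlgebra.ad k L) f) S := by
      rw [hS]
      refine Submodule.span_le.mpr ?_
      intro e he
      simpa [LieAlgebra.ad_apply] using lie_mem_spanE hchar hfE he
    simpa [LieAlgebra.ad_apply] using hle hv
  have hMtop : ∀ z : L, z ∈ M := by
    intro z
    have := LieSubalgebra.lieSpan_le.mpr hMpure
    rw [hgen] at this
    exact this (LieSubalgebra.mem_top z)
  -- S is a Lie ideal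
  let J : LieIdeal k L :=
    { toSubmodule := S
      lie_mem := fun {x m} hm => hMtop x m hm }
  -- there exists a pure extremal element
  obtain ⟨f, hf⟩ : ∃ f : L, IsPureExtremal k f := by
    by_contra hno
    push_neg at hno
    have hempty : {x : L | IsPureExtremal k x} ⊆ ((⊥ : LieSubalgebra k L) : Set L) := by
      intro x hx; exact absurd hx (hno x)
    have := LieSubalgebra.lieSpan_le.mpr hempty
    rw [hgen] at this
    have habelian : IsLieAbelian L := by
      constructor
      intro x y
      have hx : x = 0 := (LieSubalgebra.mem_bot x).mp (this (LieSubalgebra.mem_top x))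
      rw [hx, zero_lie]
    exact LieAlgebra.IsSimple.non_abelian (R := k) habelian
  have hfJ : f ∈ J := Submodule.subset_span hf.1
  rcases LieAlgebra.IsSimple.eq_bot_or_eq_top J with hbot | htop
  · exfalso
    rw [hbot] at hfJ
    exact hf.1.1 ((LieSubmodule.mem_bot f).mp hfJ)
  · ext x
    simp only [Submodule.mem_top, iff_true]
    have : x ∈ J := htop ▸ LieSubmodule.mem_top x
    exact this


lemma extremal_image (a : L)
    (hii : ∀ x : L, (ad ⁅a, ⁅a, x⁆⁆) ^ 2 = (ad a) ^ 2 * (ad x) ^ 2 * (ad a) ^ 2)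
    {x : L} (hx2 : ∀ z : L, ⁅x, ⁅x, z⁆⁆ ∈ Submodule.span k ({x} : Set L)) (z : L) :
    (⁅((ad a)^2) x, ⁅((ad a)^2) x, z⁆⁆ : L) ∈ Submodule.span k ({((ad a)^2) x} : Set L) := by
  have h := LinearMap.congr_fun (hii x) z
  simp only [pow_two, Module.End.mul_apply, LieAlgebra.ad_apply] at h
  obtain ⟨μ, hμ⟩ := Submodule.mem_span_singleton.mp (hx2 (⁅a, ⁅a, z⁆⁆ : L))
  rw [← hμ, lie_smul, lie_smul] at h
  rw [a2lie (k := k) a x]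
  rw [h]
  exact Submodule.mem_span_singleton.mpr ⟨μ, rfl⟩


end

/-- If `a` is ad-nilpotent of index `3`, `a ∈ (ad_a)²(L)`, and
`(ad_{⁅a,⁅a,x⁆⁆})² = (ad_a)² ∘ (ad_x)² ∘ (ad_a)²` for all `x`, then the inner ideal
generated by `a` is spanned by the extremal elements it contains. -/
theorem stmt4 {k L : Type*} [Field k] [LieRing L] [LieAlgebra k L]
    [FiniteDimensional k L] [LieAlgebra.IsSimple k L]
    (hchar : (2 : k) ≠ 0)
    (hgen : LieSubalgebra.lieSpan k L {x : L | IsPureExtremal k x} = ⊤)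
    (a : L)
    (hnil3 : (LieAlgebra.ad k L a) ^ 3 = 0) (hnil2 : (LieAlgebra.ad k L a) ^ 2 ≠ 0)
    (hi : a ∈ LinearMap.range ((LieAlgebra.ad k L a) ^ 2))
    (hii : ∀ x : L, (LieAlgebra.ad k L ⁅a, ⁅a, x⁆⁆) ^ 2 =
      (LieAlgebra.ad k L a) ^ 2 * (LieAlgebra.ad k L x) ^ 2 * (LieAlgebra.ad k L a) ^ 2) :
    innerIdealGenerated k a =
      Submodule.span k {x : L | IsExtremal k x ∧ x ∈ innerIdealGenerated k a} := by
  have hIG := IG_eq hchar a hnil3 hi hii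
  rw [hIG]
  set T := Submodule.span k {x : L | IsExtremal k x ∧ x ∈ LinearMap.range (((LieAlgebra.ad k L a)^2))} with hT
  apply le_antisymm
  · rintro w ⟨z, rfl⟩
    have hz : z ∈ Submodule.span k {x : L | IsExtremal k x} := by
      rw [spanE_top hchar hgen]; exact Submodule.mem_top
    have hle : Submodule.span k {x : L | IsExtremal k x}
        ≤ Submodule.comap (((LieAlgebra.ad k L a)^2)) T := by
      refine Submodule.span_le.mpr ?_
      intro e he
      simp only [Set.mem_setOf_eq] at he
      show (((LieAlgebra.ad k L a)^2)) e ∈ T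
      by_cases h0 : (((LieAlgebra.ad k L a)^2)) e = 0
      · rw [h0]; exact T.zero_mem
      · exact Submodule.subset_span ⟨⟨h0, extremal_image a hii he.2⟩, ⟨e, rfl⟩⟩
    exact hle hz
  · refine Submodule.span_le.mpr ?_
    rintro x ⟨hxe, hxI⟩
    exact hxI
end

section
/- Let k be a field of characteristic different from 2 and from 3, and let L be a finite-dimensional simple Lie algebra over k generated by its pure extremal elements. Then every element a ∈ L that is ad-nilpotent of index 3 (i.e. (ad_a)³ = 0 and (ad_a)² ≠ 0) satisfies: (i) a belongs to the image of (ad_a)² : L → L, and (ii) for every x ∈ L the equality (ad_{⁅a,⁅a,x⁆⁆})² = (ad_a)² ∘ (ad_x)² ∘ (ad_a)² holds as linear endomorphisms of L; consequently the inner ideal I_a of L generated by a is spanned as a k-vector space by extremal elements of L. -/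
namespace Stmt5Aux

open LieAlgebra Module

attribute [local instance 100] LieRing.ofAssociativeRing

variable {k L : Type*} [Field k] [LieRing L] [LieAlgebra k L]

/-- Extremal coefficient functional. -/
theorem exists_coeff {x : L} (hx : IsExtremal k x) :
    ∃ f : L →ₗ[k] k, ∀ z : L, ⁅x, ⁅x, z⁆⁆ = f z • x := by
  obtain ⟨hx0, hspan⟩ := hx
  choose c hc using fun z => Submodule.mem_span_singleton.mp (hspan z)
  have hinj := smul_left_injective k hx0
  refine ⟨⟨⟨c, ?_⟩, ?_⟩, fun z => (hc z).symm⟩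
  · intro z w
    apply hinj
    show c (z + w) • x = (c z + c w) • x
    rw [add_smul, hc z, hc w, hc (z + w), lie_add, lie_add]
  · intro s z
    apply hinj
    show (c (s • z)) • x = (s * c z) • x
    rw [hc (s • z), mul_smul, hc z, lie_smul, lie_smul]

/-- Premet identity P1. -/
theorem premet1 {x : L} {f : L →ₗ[k] k} (hf : ∀ z : L, ⁅x, ⁅x, z⁆⁆ = f z • x) (u v : L) :
    (2 : k) • ⁅⁅x, u⁆, ⁅x, v⁆⁆ = f ⁅u, v⁆ • x - f u • ⁅x, v⁆ + f v • ⁅x, u⁆ := by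
  have h1 : ⁅⁅x, u⁆, ⁅x, v⁆⁆ = ⁅x, ⁅u, ⁅x, v⁆⁆⁆ - ⁅u, ⁅x, ⁅x, v⁆⁆⁆ := lie_lie x u ⁅x, v⁆
  have h2 : ⁅x, ⁅u, ⁅x, v⁆⁆⁆ = ⁅x, ⁅⁅u, x⁆, v⁆⁆ + f ⁅u, v⁆ • x := by
    rw [leibniz_lie u x v, lie_add, hf]
  have h3 : ⁅x, ⁅⁅u, x⁆, v⁆⁆ = -⁅x, ⁅⁅x, u⁆, v⁆⁆ := by
    rw [← lie_skew u x, neg_lie, lie_neg]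
  have h4 : ⁅x, ⁅⁅x, u⁆, v⁆⁆ = f u • ⁅x, v⁆ + ⁅⁅x, u⁆, ⁅x, v⁆⁆ := by
    have := leibniz_lie x ⁅x, u⁆ v
    rwa [hf u, smul_lie] at this
  have h5 : ⁅u, ⁅x, ⁅x, v⁆⁆⁆ = f v • ⁅u, x⁆ := by rw [hf v, lie_smul]
  have h7 : ⁅u, x⁆ = -⁅x, u⁆ := by rw [← lie_skew u x]
  have e1 : ⁅⁅x, u⁆, ⁅x, v⁆⁆ =
      -(f u • ⁅x, v⁆) - ⁅⁅x, u⁆, ⁅x, v⁆⁆ + f ⁅u, v⁆ • x + f v • ⁅x, u⁆ := by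
    calc ⁅⁅x, u⁆, ⁅x, v⁆⁆ = ⁅x, ⁅u, ⁅x, v⁆⁆⁆ - ⁅u, ⁅x, ⁅x, v⁆⁆⁆ := h1
      _ = (⁅x, ⁅⁅u, x⁆, v⁆⁆ + f ⁅u, v⁆ • x) - f v • ⁅u, x⁆ := by rw [h2, h5]
      _ = (-(f u • ⁅x, v⁆ + ⁅⁅x, u⁆, ⁅x, v⁆⁆) + f ⁅u, v⁆ • x) - f v • -⁅x, u⁆ := by
            rw [h3, h4, h7]
      _ = -(f u • ⁅x, v⁆) - ⁅⁅x, u⁆, ⁅x, v⁆⁆ + f ⁅u, v⁆ • x + f v • ⁅x, u⁆ := by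
            rw [smul_neg]; abel
  rw [two_smul]
  linear_combination (norm := module) e1

/-! ### Exponentials of extremal elements -/

/-- The exponential `exp(t ad x)` for an extremal element `x`, as a raw function. -/
def expE (x : L) (t : k) (v : L) : L :=
  v + t • ⁅x, v⁆ + ((2 : k)⁻¹ * t ^ 2) • ⁅x, ⁅x, v⁆⁆

theorem expE_zero (x : L) (t : k) : expE x t (0 : L) = 0 := by simp [expE]

theorem expE_smul (x : L) (t s : k) (v : L) : expE x t (s • v) = s • expE x t v := by
  simp only [expE, lie_smul, smul_add, smul_comm s]

theorem expE_add (x : L) (t : k) (v w : L) :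
    expE x t (v + w) = expE x t v + expE x t w := by
  simp only [expE, lie_add, smul_add]; abel

theorem expE_lie {x : L} {f : L →ₗ[k] k} (h2 : (2 : k) ≠ 0)
    (hf : ∀ z : L, ⁅x, ⁅x, z⁆⁆ = f z • x) (t : k) (u v : L) :
    expE x t ⁅u, v⁆ = ⁅expE x t u, expE x t v⁆ := by
  have hT : ⁅⁅x, u⁆, ⁅x, v⁆⁆ =
      (2 : k)⁻¹ • (f ⁅u, v⁆ • x - f u • ⁅x, v⁆ + f v • ⁅x, u⁆) := by
    rw [← premet1 hf u v, smul_smul, inv_mul_cancel₀ h2, one_smul]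
  have sk1 : ⁅u, x⁆ = -⁅x, u⁆ := by rw [← lie_skew u x]
  have sk2 : ⁅⁅x, u⁆, x⁆ = -(f u • x) := by
    rw [← lie_skew ⁅x, u⁆ x, hf u]
  have hL : expE x t ⁅u, v⁆ = ⁅u, v⁆ + t • (⁅⁅x, u⁆, v⁆ + ⁅u, ⁅x, v⁆⁆) +
      ((2 : k)⁻¹ * t ^ 2) • (f ⁅u, v⁆ • x) := by
    rw [expE, hf ⁅u, v⁆, leibniz_lie x u v]
  have hR : ⁅expE x t u, expE x t v⁆ =
      ⁅u + t • ⁅x, u⁆ + ((2 : k)⁻¹ * t ^ 2) • (f u • x),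
        v + t • ⁅x, v⁆ + ((2 : k)⁻¹ * t ^ 2) • (f v • x)⁆ := by
    rw [expE, expE, hf u, hf v]
  rw [hL, hR]
  simp only [lie_add, add_lie, lie_smul, smul_lie, smul_add, smul_smul, hT, sk1, sk2, hf,
    lie_self, smul_zero, smul_neg, lie_neg, neg_lie, neg_neg]
  match_scalars <;> field_simp <;> ring

theorem expE_inv {x : L} {f : L →ₗ[k] k} (h2 : (2 : k) ≠ 0)
    (hf : ∀ z : L, ⁅x, ⁅x, z⁆⁆ = f z • x) (t : k) (v : L) :
    expE x t (expE x (-t) v) = v := by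
  have h1 : expE x (-t) v = v + ((-t) • ⁅x, v⁆ + ((2 : k)⁻¹ * t ^ 2) • ⁅x, ⁅x, v⁆⁆) := by
    rw [expE, neg_sq]; abel
  have h2' : expE x t ⁅x, v⁆ = ⁅x, v⁆ + t • (f v • x) := by
    rw [expE, hf v, lie_smul, lie_self, smul_zero, smul_zero, add_zero]
  have h3 : expE x t ⁅x, ⁅x, v⁆⁆ = f v • x := by
    simp [expE, hf v, lie_smul, lie_self]
  rw [h1, expE_add, expE_add, expE_smul, expE_smul, h2', h3, expE, hf v]
  match_scalars <;> field_simp <;> ring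

theorem expE_ne_zero {x : L} {f : L →ₗ[k] k} (h2 : (2 : k) ≠ 0)
    (hf : ∀ z : L, ⁅x, ⁅x, z⁆⁆ = f z • x) (t : k) {v : L} (hv : v ≠ 0) :
    expE x t v ≠ 0 := by
  intro h0
  apply hv
  have : expE x (-t) (expE x t v) = v := by
    have := expE_inv h2 hf (-t) v
    rwa [neg_neg] at this
  rw [h0, expE_zero] at this
  exact this.symm

theorem expE_extremal {x : L} {f : L →ₗ[k] k} (h2 : (2 : k) ≠ 0)
    (hf : ∀ z : L, ⁅x, ⁅x, z⁆⁆ = f z • x) (t : k) {y : L} (hy : IsExtremal k y) :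
    IsExtremal k (expE x t y) := by
  refine ⟨expE_ne_zero h2 hf t hy.1, fun z => ?_⟩
  have hz : z = expE x t (expE x (-t) z) := (expE_inv h2 hf t z).symm
  obtain ⟨c, hc⟩ := Submodule.mem_span_singleton.mp (hy.2 (expE x (-t) z))
  rw [hz, ← expE_lie h2 hf, ← expE_lie h2 hf, ← hc, expE_smul]
  exact Submodule.smul_mem _ _ (Submodule.mem_span_singleton_self _)

theorem expE_pure {x : L} {f : L →ₗ[k] k} (h2 : (2 : k) ≠ 0)
    (hf : ∀ z : L, ⁅x, ⁅x, z⁆⁆ = f z • x) (t : k) {y : L} (hy : IsPureExtremal k y) :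
    IsPureExtremal k (expE x t y) := by
  refine ⟨expE_extremal h2 hf t hy.1, fun hsand => hy.2 fun z => ?_⟩
  have := hsand (expE x t z)
  rw [← expE_lie h2 hf, ← expE_lie h2 hf] at this
  by_contra hne
  exact expE_ne_zero h2 hf t hne this

theorem expE_diff {x : L} (w : L) :
    expE x (1 : k) w - expE x (-1 : k) w = (2 : k) • ⁅x, w⁆ := by
  rw [expE, expE]
  match_scalars <;> ring

/-! ### Simplicity consequences -/

section Simple

variable [LieAlgebra.IsSimple k L]

theorem lie_mem_of_forall_pure
    (hgen : LieSubalgebra.lieSpan k L {x : L | IsPureExtremal k x} = ⊤)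
    {V : Submodule k L}
    (hV : ∀ x' : L, IsPureExtremal k x' → ∀ v ∈ V, ⁅x', v⁆ ∈ V)
    (w : L) {v : L} (hv : v ∈ V) : ⁅w, v⁆ ∈ V := by
  let N : LieSubalgebra k L :=
    { carrier := {w : L | ∀ v ∈ V, ⁅w, v⁆ ∈ V}
      add_mem' := fun {a b} ha hb v hv => by
        rw [add_lie]; exact V.add_mem (ha v hv) (hb v hv)
      zero_mem' := fun v hv => by rw [zero_lie]; exact V.zero_mem
      smul_mem' := fun s w hw v hv => by rw [smul_lie]; exact V.smul_mem s (hw v hv)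
      lie_mem' := fun {w1 w2} h1 h2 v hv => by
        rw [lie_lie]; exact V.sub_mem (h1 _ (h2 v hv)) (h2 _ (h1 v hv)) }
  have hsub : {x : L | IsPureExtremal k x} ⊆ N := fun x hx => hV x hx
  have hle : (⊤ : LieSubalgebra k L) ≤ N := by
    rw [← hgen]; exact LieSubalgebra.lieSpan_le.mpr hsub
  exact hle trivial v hv

theorem invariant_eq_bot_or_top {V : Submodule k L}
    (hV : ∀ (w : L) {v : L}, v ∈ V → ⁅w, v⁆ ∈ V) : V = ⊥ ∨ V = ⊤ := by
  let I : LieIdeal k L := { V with lie_mem := fun {w m} hm => hV w hm }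
  rcases LieAlgebra.IsSimple.eq_bot_or_eq_top I with h | h
  · left
    rw [Submodule.eq_bot_iff]
    intro m hm
    have : m ∈ I := hm
    rw [h] at this
    exact (LieSubmodule.mem_bot _).mp this
  · right
    rw [Submodule.eq_top_iff']
    intro m
    have : m ∈ I := by rw [h]; exact LieSubmodule.mem_top _
    exact this

theorem exists_pure
    (hgen : LieSubalgebra.lieSpan k L {x : L | IsPureExtremal k x} = ⊤) :
    ∃ x : L, IsPureExtremal k x := by
  by_contra h
  push_neg at h
  have hempty : {x : L | IsPureExtremal k x} = (∅ : Set L) := by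
    ext y; simp [h y]
  have hle : (⊤ : LieSubalgebra k L) ≤ ⊥ := by
    rw [← hgen, hempty]
    exact LieSubalgebra.lieSpan_le.mpr (by simp)
  have habel : IsLieAbelian L := by
    constructor
    intro a b
    have : a ∈ (⊥ : LieSubalgebra k L) := hle trivial
    rw [LieSubalgebra.mem_bot] at this
    rw [this, zero_lie]
  exact LieAlgebra.IsSimple.non_abelian (R := k) habel

theorem span_pure_eq_top (h2 : (2 : k) ≠ 0)
    (hgen : LieSubalgebra.lieSpan k L {x : L | IsPureExtremal k x} = ⊤) :
    Submodule.span k {x : L | IsPureExtremal k x} = ⊤ := by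
  set V := Submodule.span k {x : L | IsPureExtremal k x} with hVdef
  have hVp : ∀ x' : L, IsPureExtremal k x' → ∀ v ∈ V, ⁅x', v⁆ ∈ V := by
    intro x' hx' v hv
    obtain ⟨f, hf⟩ := exists_coeff hx'.1
    induction hv using Submodule.span_induction with
    | mem y hy =>
        have key : ⁅x', y⁆ = (2 : k)⁻¹ • (expE x' (1 : k) y - expE x' (-1 : k) y) := by
          rw [expE_diff, smul_smul, inv_mul_cancel₀ h2, one_smul]
        rw [key]
        refine V.smul_mem _ (V.sub_mem ?_ ?_) <;>
          exact Submodule.subset_span (expE_pure h2 hf _ hy)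
    | zero => rw [lie_zero]; exact V.zero_mem
    | add y z _ _ hy hz => rw [lie_add]; exact V.add_mem hy hz
    | smul s y _ hy => rw [lie_smul]; exact V.smul_mem s hy
  have hV : ∀ (w : L) {v : L}, v ∈ V → ⁅w, v⁆ ∈ V :=
    fun w {v} hv => lie_mem_of_forall_pure hgen hVp w hv
  rcases invariant_eq_bot_or_top hV with h | h
  · exfalso
    obtain ⟨x₀, hx₀⟩ := exists_pure hgen
    have : x₀ ∈ V := Submodule.subset_span hx₀
    rw [h] at this
    exact hx₀.1.1 ((Submodule.mem_bot k).mp this)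
  · exact h

theorem exists_pure_nonorth (h2 : (2 : k) ≠ 0)
    (hgen : LieSubalgebra.lieSpan k L {x : L | IsPureExtremal k x} = ⊤)
    {v : L} (hv : v ≠ 0) :
    ∃ x : L, IsPureExtremal k x ∧ ⁅x, ⁅x, v⁆⁆ ≠ 0 := by
  by_contra hcon
  push_neg at hcon
  let R : Submodule k L :=
    { carrier := {w : L | ∀ x' : L, IsPureExtremal k x' → ⁅x', ⁅x', w⁆⁆ = 0}
      add_mem' := fun {a b} ha hb x' hx' => by
        rw [lie_add, lie_add, ha x' hx', hb x' hx', add_zero]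
      zero_mem' := fun x' hx' => by rw [lie_zero, lie_zero]
      smul_mem' := fun s w hw x' hx' => by
        rw [lie_smul, lie_smul, hw x' hx', smul_zero] }
  have hRp : ∀ x' : L, IsPureExtremal k x' → ∀ w ∈ R, ⁅x', w⁆ ∈ R := by
    intro x' hx' w hw
    obtain ⟨f, hf⟩ := exists_coeff hx'.1
    have hRinv : ∀ (t : k), ∀ w ∈ R, expE x' t w ∈ R := by
      intro t w hw x hx
      have hx1 : x = expE x' t (expE x' (-t) x) := (expE_inv h2 hf t x).symm
      have hψpure : IsPureExtremal k (expE x' (-t) x) := expE_pure h2 hf (-t) hx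
      calc ⁅x, ⁅x, expE x' t w⁆⁆
          = ⁅expE x' t (expE x' (-t) x), ⁅expE x' t (expE x' (-t) x), expE x' t w⁆⁆ := by
            rw [← hx1]
        _ = expE x' t ⁅expE x' (-t) x, ⁅expE x' (-t) x, w⁆⁆ := by
            rw [← expE_lie h2 hf, ← expE_lie h2 hf]
        _ = expE x' t 0 := by rw [hw _ hψpure]
        _ = 0 := expE_zero _ _
    have key : ⁅x', w⁆ = (2 : k)⁻¹ • (expE x' (1 : k) w - expE x' (-1 : k) w) := by
      rw [expE_diff, smul_smul, inv_mul_cancel₀ h2, one_smul]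
    rw [key]
    exact R.smul_mem _ (R.sub_mem (hRinv _ w hw) (hRinv _ w hw))
  have hR : ∀ (u : L) {w : L}, w ∈ R → ⁅u, w⁆ ∈ R :=
    fun u {w} hw => lie_mem_of_forall_pure hgen hRp u hw
  rcases invariant_eq_bot_or_top hR with h | h
  · have : v ∈ R := fun x' hx' => hcon x' hx'
    rw [h] at this
    exact hv ((Submodule.mem_bot k).mp this)
  · obtain ⟨x₀, hx₀⟩ := exists_pure hgen
    obtain ⟨f₀, hf₀⟩ := exists_coeff hx₀.1
    apply hx₀.2
    intro z
    have : z ∈ R := by rw [h]; trivial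
    exact this x₀ hx₀

end Simple

/-! ### Ring computations -/

section RingCalc

variable {R : Type*} [Ring R]

theorem calc_e1 {A X : R} (h3 : A ^ 3 = 0) (hR : A * X * A ^ 2 = A ^ 2 * X * A) :
    A ^ 2 * X * A ^ 2 = 0 := by
  calc A ^ 2 * X * A ^ 2 = A * (A * X * A ^ 2) := by noncomm_ring
    _ = A * (A ^ 2 * X * A) := by rw [hR]
    _ = A ^ 3 * (X * A) := by noncomm_ring
    _ = 0 := by rw [h3, zero_mul]

theorem calc_sq {A X : R} (h3 : A ^ 3 = 0) (hR : A * X * A ^ 2 = A ^ 2 * X * A) :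
    (A ^ 2 * X - A * X * A - A * X * A + X * A ^ 2) ^ 2 = A ^ 2 * X ^ 2 * A ^ 2 := by
  have q2 : (A * X * A) * (A * X * A) = A ^ 2 * (X * A * X) * A := by
    calc (A * X * A) * (A * X * A) = (A * X * A ^ 2) * (X * A) := by noncomm_ring
      _ = (A ^ 2 * X * A) * (X * A) := by rw [hR]
      _ = A ^ 2 * (X * A * X) * A := by noncomm_ring
  have q6 : (A * X * A) * (X * A ^ 2) = A ^ 2 * (X * A * X) * A := by
    calc (A * X * A) * (X * A ^ 2) = A * X * (A * X * A ^ 2) := by noncomm_ring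
      _ = A * X * (A ^ 2 * X * A) := by rw [hR]
      _ = (A * X * A ^ 2) * (X * A) := by noncomm_ring
      _ = (A ^ 2 * X * A) * (X * A) := by rw [hR]
      _ = A ^ 2 * (X * A * X) * A := by noncomm_ring
  have key : (A ^ 2 * X - A * X * A - A * X * A + X * A ^ 2) ^ 2
      = (A ^ 2 * X * A ^ 2) * X - 2 * (A ^ 2 * (X * A * X) * A) + A ^ 2 * X ^ 2 * A ^ 2
        - 2 * ((A * X) * A ^ 3 * X) + 4 * ((A * X * A) * (A * X * A))
        - 2 * ((A * X * A) * (X * A ^ 2))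
        + X * A ^ 3 * (A * X) - 2 * (X * A ^ 3 * (X * A)) + X * (A ^ 2 * X * A ^ 2) := by
    noncomm_ring
  rw [key, q2, q6, calc_e1 h3 hR, h3]
  noncomm_ring

theorem calc_inner {A U V : R} (h3 : A ^ 3 = 0)
    (hRu : A * U * A ^ 2 = A ^ 2 * U * A) (hRv : A * V * A ^ 2 = A ^ 2 * V * A) :
    (A ^ 2 * U - A * U * A - A * U * A + U * A ^ 2) *
      (A ^ 2 * V - A * V * A - A * V * A + V * A ^ 2)
      = A ^ 2 * (U * A ^ 2 * V + U * V * A ^ 2) := by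
  have q2 : (A * U * A) * (A * V * A) = A ^ 2 * (U * A * V) * A := by
    calc (A * U * A) * (A * V * A) = (A * U * A ^ 2) * (V * A) := by noncomm_ring
      _ = (A ^ 2 * U * A) * (V * A) := by rw [hRu]
      _ = A ^ 2 * (U * A * V) * A := by noncomm_ring
  have q6 : (A * U * A) * (V * A ^ 2) = A ^ 2 * (U * A * V) * A := by
    calc (A * U * A) * (V * A ^ 2) = A * U * (A * V * A ^ 2) := by noncomm_ring
      _ = A * U * (A ^ 2 * V * A) := by rw [hRv]
      _ = (A * U * A ^ 2) * (V * A) := by noncomm_ring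
      _ = (A ^ 2 * U * A) * (V * A) := by rw [hRu]
      _ = A ^ 2 * (U * A * V) * A := by noncomm_ring
  have key : (A ^ 2 * U - A * U * A - A * U * A + U * A ^ 2) *
      (A ^ 2 * V - A * V * A - A * V * A + V * A ^ 2)
      = A ^ 2 * (U * A ^ 2 * V) - 2 * (A ^ 2 * (U * A * V) * A) + A ^ 2 * (U * V * A ^ 2)
        - 2 * ((A * U) * A ^ 3 * V) + 4 * ((A * U * A) * (A * V * A))
        - 2 * ((A * U * A) * (V * A ^ 2))
        + U * A ^ 3 * (A * V) - 2 * (U * A ^ 3 * (V * A)) + U * (A ^ 2 * V * A ^ 2) := by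
    noncomm_ring
  rw [key, q2, q6, calc_e1 h3 hRv, h3]
  noncomm_ring

theorem calc_AB {A X : R} (h3 : A ^ 3 = 0) (hR : A * X * A ^ 2 = A ^ 2 * X * A) :
    A * (A ^ 2 * X - A * X * A - A * X * A + X * A ^ 2) = -(A ^ 2 * X * A) := by
  have key : A * (A ^ 2 * X - A * X * A - A * X * A + X * A ^ 2)
      = A ^ 3 * X - A ^ 2 * X * A - A ^ 2 * X * A + (A * X * A ^ 2) := by noncomm_ring
  rw [key, h3, hR]
  noncomm_ring

theorem calc_BA {A X : R} (h3 : A ^ 3 = 0) (hR : A * X * A ^ 2 = A ^ 2 * X * A) :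
    (A ^ 2 * X - A * X * A - A * X * A + X * A ^ 2) * A = -(A ^ 2 * X * A) := by
  have key : (A ^ 2 * X - A * X * A - A * X * A + X * A ^ 2) * A
      = A ^ 2 * X * A - (A * X * A ^ 2) - (A * X * A ^ 2) + X * A ^ 3 := by noncomm_ring
  rw [key, h3, hR]
  noncomm_ring

theorem calc_A2B {A X : R} (h3 : A ^ 3 = 0) (hR : A * X * A ^ 2 = A ^ 2 * X * A) :
    A ^ 2 * (A ^ 2 * X - A * X * A - A * X * A + X * A ^ 2) = 0 := by
  have key : A ^ 2 * (A ^ 2 * X - A * X * A - A * X * A + X * A ^ 2)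
      = A ^ 3 * (A * X) - A ^ 3 * (X * A) - A ^ 3 * (X * A) + (A ^ 2 * X * A ^ 2) := by
    noncomm_ring
  rw [key, h3, calc_e1 h3 hR]
  noncomm_ring

end RingCalc

/-! ### Operator identities for `ad` -/

section AdCalc

theorem ad_lie_lie (a x : L) :
    LieAlgebra.ad k L ⁅a, ⁅a, x⁆⁆
      = (ad k L a) ^ 2 * (ad k L x) - (ad k L a) * (ad k L x) * (ad k L a)
        - (ad k L a) * (ad k L x) * (ad k L a) + (ad k L x) * (ad k L a) ^ 2 := by
  rw [LieHom.map_lie, LieHom.map_lie]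
  simp only [Ring.lie_def]
  noncomm_ring

theorem ad_rel (h3k : (3 : k) ≠ 0) {a : L} (ha : (ad k L a) ^ 3 = 0) (x : L) :
    (ad k L a) * (ad k L x) * (ad k L a) ^ 2
      = (ad k L a) ^ 2 * (ad k L x) * (ad k L a) := by
  set A := ad k L a with hA
  set X := ad k L x with hX
  have e2 : ⁅a, ⁅a, ⁅a, x⁆⁆⁆ = (A ^ 3) x := by
    simp [pow_succ, Module.End.mul_apply, ad_apply, hA]
  have h0 : ⁅A, ⁅A, ⁅A, X⁆⁆⁆ = 0 := by
    have e : ⁅A, ⁅A, ⁅A, X⁆⁆⁆ = ad k L ⁅a, ⁅a, ⁅a, x⁆⁆⁆ := by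
      rw [LieHom.map_lie, LieHom.map_lie, LieHom.map_lie]
    rw [e, e2, ha]
    simp
  have hexp : ⁅A, ⁅A, ⁅A, X⁆⁆⁆
      = A ^ 3 * X - X * A ^ 3 + 3 * (A * X * A ^ 2) - 3 * (A ^ 2 * X * A) := by
    simp only [Ring.lie_def]
    noncomm_ring
  rw [hexp, ha] at h0
  have h0' : (3 : Module.End k L) * (A * X * A ^ 2) - 3 * (A ^ 2 * X * A) = 0 := by
    simpa using h0
  have h0'' : (3 : Module.End k L) * (A * X * A ^ 2) = 3 * (A ^ 2 * X * A) :=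
    sub_eq_zero.mp h0'
  have h1 : (3 : k) • (A * X * A ^ 2) = (3 : k) • (A ^ 2 * X * A) := by
    rw [Algebra.smul_def, Algebra.smul_def, map_ofNat]
    exact h0''
  exact smul_right_injective _ h3k h1

theorem ad_sq_apply (a z : L) : ((ad k L a) ^ 2) z = ⁅a, ⁅a, z⁆⁆ := by
  simp [pow_two, Module.End.mul_apply, ad_apply]

theorem part_two (h3k : (3 : k) ≠ 0) {a : L} (ha : (ad k L a) ^ 3 = 0) (x : L) :
    (ad k L ⁅a, ⁅a, x⁆⁆) ^ 2 = (ad k L a) ^ 2 * (ad k L x) ^ 2 * (ad k L a) ^ 2 := by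
  rw [ad_lie_lie]
  exact calc_sq ha (ad_rel h3k ha x)

theorem inner_mem (h3k : (3 : k) ≠ 0) {a : L} (ha : (ad k L a) ^ 3 = 0) (u v z : L) :
    ⁅⁅a, ⁅a, u⁆⁆, ⁅⁅a, ⁅a, v⁆⁆, z⁆⁆ ∈ LinearMap.range ((ad k L a) ^ 2) := by
  have hop : (ad k L ⁅a, ⁅a, u⁆⁆) * (ad k L ⁅a, ⁅a, v⁆⁆)
      = (ad k L a) ^ 2 * ((ad k L u) * (ad k L a) ^ 2 * (ad k L v)
          + (ad k L u) * (ad k L v) * (ad k L a) ^ 2) := by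
    rw [ad_lie_lie, ad_lie_lie]
    exact calc_inner ha (ad_rel h3k ha u) (ad_rel h3k ha v)
  have happ : ⁅⁅a, ⁅a, u⁆⁆, ⁅⁅a, ⁅a, v⁆⁆, z⁆⁆
      = ((ad k L ⁅a, ⁅a, u⁆⁆) * (ad k L ⁅a, ⁅a, v⁆⁆)) z := by
    simp only [Module.End.mul_apply, ad_apply]
  rw [happ, hop]
  exact ⟨_, rfl⟩

section Asub

variable (h3k : (3 : k) ≠ 0)

theorem ad_sub_smul_sq (h3k : (3 : k) ≠ 0) {a : L} (ha : (ad k L a) ^ 3 = 0) (x : L) (l : k) :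
    (ad k L (a - l • ⁅a, ⁅a, x⁆⁆)) ^ 2
      = (ad k L a) ^ 2 + l • ((ad k L a) ^ 2 * (ad k L x) * (ad k L a))
        + l • ((ad k L a) ^ 2 * (ad k L x) * (ad k L a))
        + (l * l) • ((ad k L a) ^ 2 * (ad k L x) ^ 2 * (ad k L a) ^ 2) := by
  set A := ad k L a with hA
  set X := ad k L x with hX
  set B := ad k L ⁅a, ⁅a, x⁆⁆ with hB
  have hR := ad_rel h3k ha x
  have hBdef : B = A ^ 2 * X - A * X * A - A * X * A + X * A ^ 2 := ad_lie_lie a x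
  have hAB : A * B = -(A ^ 2 * X * A) := by rw [hBdef]; exact calc_AB ha hR
  have hBA : B * A = -(A ^ 2 * X * A) := by rw [hBdef]; exact calc_BA ha hR
  have hB2 : B * B = A ^ 2 * X ^ 2 * A ^ 2 := by
    have := part_two h3k ha x
    rw [pow_two] at this
    exact this
  have hA' : ad k L (a - l • ⁅a, ⁅a, x⁆⁆) = A - l • B := by
    rw [map_sub, map_smul]
  rw [hA', pow_two]
  have expand : (A - l • B) * (A - l • B)
      = A * A - l • (A * B) - l • (B * A) + (l * l) • (B * B) := by
    simp only [mul_sub, sub_mul, smul_mul_assoc, mul_smul_comm, smul_smul, smul_sub, smul_add]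
    abel
  rw [expand, hAB, hBA, hB2, ← pow_two]
  module

theorem ad_sub_smul_cube (h3k : (3 : k) ≠ 0) {a : L} (ha : (ad k L a) ^ 3 = 0) (x : L) (l : k) :
    (ad k L (a - l • ⁅a, ⁅a, x⁆⁆)) ^ 3 = 0 := by
  have hA' : ad k L (a - l • ⁅a, ⁅a, x⁆⁆) = ad k L a - l • ad k L ⁅a, ⁅a, x⁆⁆ := by
    rw [map_sub, map_smul]
  rw [pow_succ, ad_sub_smul_sq h3k ha x l, hA']
  set A := ad k L a with hA
  set X := ad k L x with hX
  set B := ad k L ⁅a, ⁅a, x⁆⁆ with hB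
  have hR : A * X * A ^ 2 = A ^ 2 * X * A := ad_rel h3k ha x
  have hBdef : B = A ^ 2 * X - A * X * A - A * X * A + X * A ^ 2 := ad_lie_lie a x
  have hAB : A * B = -(A ^ 2 * X * A) := by rw [hBdef]; exact calc_AB ha hR
  have hA2B : A ^ 2 * B = 0 := by rw [hBdef]; exact calc_A2B ha hR
  have hGA : A ^ 2 * X * A * A = 0 := by
    calc A ^ 2 * X * A * A = A ^ 2 * X * A ^ 2 := by noncomm_ring
      _ = 0 := calc_e1 ha hR
  have hGB : A ^ 2 * X * A * B = 0 := by
    calc A ^ 2 * X * A * B = (A ^ 2 * X) * (A * B) := by noncomm_ring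
      _ = (A ^ 2 * X) * (-(A ^ 2 * X * A)) := by rw [hAB]
      _ = -((A ^ 2 * X * A ^ 2) * (X * A)) := by noncomm_ring
      _ = 0 := by rw [calc_e1 ha hR]; simp
  have hHA : A ^ 2 * X ^ 2 * A ^ 2 * A = 0 := by
    calc A ^ 2 * X ^ 2 * A ^ 2 * A = (A ^ 2 * X ^ 2) * A ^ 3 := by noncomm_ring
      _ = 0 := by rw [ha, mul_zero]
  have hHB : A ^ 2 * X ^ 2 * A ^ 2 * B = 0 := by
    calc A ^ 2 * X ^ 2 * A ^ 2 * B = (A ^ 2 * X ^ 2) * (A ^ 2 * B) := by noncomm_ring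
      _ = 0 := by rw [hA2B, mul_zero]
  have hAAA : A ^ 2 * A = 0 := by rw [← pow_succ, ha]
  simp only [add_mul, mul_sub, smul_mul_assoc, mul_smul_comm, smul_smul]
  rw [hAAA, hA2B, hGA, hGB, hHA, hHB]
  simp

theorem ad_sub_smul_ker (h3k : (3 : k) ≠ 0) {a : L} (ha : (ad k L a) ^ 3 = 0) (x : L) (l : k)
    {z : L} (hz : ((ad k L a) ^ 2) z = 0) :
    ((ad k L (a - l • ⁅a, ⁅a, x⁆⁆)) ^ 2) z = 0 := by
  rw [ad_sub_smul_sq h3k ha x l]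
  have hGz : ((ad k L a) ^ 2 * (ad k L x) * (ad k L a)) z = 0 := by
    rw [← ad_rel h3k ha x, Module.End.mul_apply, Module.End.mul_apply, hz]
    simp
  have hHz : ((ad k L a) ^ 2 * (ad k L x) ^ 2 * (ad k L a) ^ 2) z = 0 := by
    rw [Module.End.mul_apply, hz]
    simp
  simp only [LinearMap.add_apply, LinearMap.smul_apply, hz, hGz, hHz, smul_zero, add_zero]

theorem ad_sub_smul_range (h3k : (3 : k) ≠ 0) {a : L} (ha : (ad k L a) ^ 3 = 0) (x : L) (l : k) :
    LinearMap.range ((ad k L (a - l • ⁅a, ⁅a, x⁆⁆)) ^ 2) ≤ LinearMap.range ((ad k L a) ^ 2) := by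
  have hfact : (ad k L (a - l • ⁅a, ⁅a, x⁆⁆)) ^ 2
      = (ad k L a) ^ 2 * (1 + l • ((ad k L x) * (ad k L a))
          + l • ((ad k L x) * (ad k L a)) + (l * l) • ((ad k L x) ^ 2 * (ad k L a) ^ 2)) := by
    rw [ad_sub_smul_sq h3k ha x l]
    have e1 : (ad k L a) ^ 2 * ((ad k L x) * (ad k L a)) = (ad k L a) ^ 2 * (ad k L x) * (ad k L a) := by
      noncomm_ring
    have e2 : (ad k L a) ^ 2 * ((ad k L x) ^ 2 * (ad k L a) ^ 2)
        = (ad k L a) ^ 2 * (ad k L x) ^ 2 * (ad k L a) ^ 2 := by noncomm_ring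
    simp only [mul_add, mul_one, mul_smul_comm, e1, e2]
  rw [hfact, Module.End.mul_eq_comp]
  exact LinearMap.range_comp_le_range _ _

end Asub

end AdCalc

/-! ### Vector identities -/

theorem lie_ax {x a : L} {f : L →ₗ[k] k} (hf : ∀ z : L, ⁅x, ⁅x, z⁆⁆ = f z • x) :
    ⁅x, ⁅a, x⁆⁆ = -(f a • x) := by
  have sk : ⁅a, x⁆ = -⁅x, a⁆ := by rw [← lie_skew a x]
  rw [sk, lie_neg, hf a]

theorem lie_xb {x a : L} {f : L →ₗ[k] k} (hf : ∀ z : L, ⁅x, ⁅x, z⁆⁆ = f z • x) :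
    ⁅x, ⁅a, ⁅a, x⁆⁆⁆ = -(f a • ⁅a, x⁆) := by
  have h0 : ⁅⁅x, a⁆, ⁅a, x⁆⁆ = 0 := by
    rw [show ⁅x, a⁆ = -⁅a, x⁆ from by rw [← lie_skew x a], neg_lie, lie_self, neg_zero]
  calc ⁅x, ⁅a, ⁅a, x⁆⁆⁆ = ⁅⁅x, a⁆, ⁅a, x⁆⁆ + ⁅a, ⁅x, ⁅a, x⁆⁆⁆ := leibniz_lie x a ⁅a, x⁆
    _ = ⁅a, -(f a • x)⁆ := by rw [h0, lie_ax hf, zero_add]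
    _ = -(f a • ⁅a, x⁆) := by rw [lie_neg, lie_smul]

theorem lie_lie_xb {x a : L} {f : L →ₗ[k] k} (hf : ∀ z : L, ⁅x, ⁅x, z⁆⁆ = f z • x) :
    ⁅x, ⁅x, ⁅a, ⁅a, x⁆⁆⁆⁆ = (f a * f a) • x := by
  rw [lie_xb hf, lie_neg, lie_smul, lie_ax hf, smul_neg, neg_neg, smul_smul]

theorem sandwich_orth {x c : L} {f : L →ₗ[k] k} (hf : ∀ z : L, ⁅x, ⁅x, z⁆⁆ = f z • x)
    (hc : ∀ z : L, ⁅c, ⁅c, z⁆⁆ = 0) : ⁅x, ⁅x, c⁆⁆ = 0 := by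
  by_cases hcx : ⁅c, x⁆ = 0
  · have hxc : ⁅x, c⁆ = 0 := by
      rw [show ⁅x, c⁆ = -⁅c, x⁆ from by rw [← lie_skew x c], hcx, neg_zero]
    rw [hxc, lie_zero]
  · have h1 : ⁅c, ⁅x, c⁆⁆ = 0 := by
      rw [show ⁅x, c⁆ = -⁅c, x⁆ from by rw [← lie_skew x c], lie_neg, hc x, neg_zero]
    have h3 : ⁅c, ⁅x, ⁅x, c⁆⁆⁆ = 0 := by
      rw [leibniz_lie c x ⁅x, c⁆, h1, lie_zero, add_zero]
      rw [show ⁅x, c⁆ = -⁅c, x⁆ from by rw [← lie_skew x c], lie_neg, lie_self, neg_zero]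
    rw [hf c, lie_smul] at h3
    have hfc : f c = 0 := by
      rcases smul_eq_zero.mp h3 with h | h
      · exact h
      · exact absurd h hcx
    rw [hf c, hfc, zero_smul]

/-! ### Regularity -/

section Main

variable [LieAlgebra.IsSimple k L] [FiniteDimensional k L]

theorem regular (h2 : (2 : k) ≠ 0) (h3k : (3 : k) ≠ 0)
    (hgen : LieSubalgebra.lieSpan k L {x : L | IsPureExtremal k x} = ⊤)
    (a : L) (ha : (ad k L a) ^ 3 = 0) :
    a ∈ LinearMap.range ((ad k L a) ^ 2) := by
  suffices H : ∀ n : ℕ, ∀ a : L, (ad k L a) ^ 3 = 0 →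
      Module.finrank k (LinearMap.range ((ad k L a) ^ 2)) ≤ n →
      a ∈ LinearMap.range ((ad k L a) ^ 2) from H _ a ha le_rfl
  intro n
  induction n with
  | zero =>
    intro a ha hr
    by_cases ha0 : a = 0
    · rw [ha0]; exact zero_mem _
    exfalso
    have hbot : LinearMap.range ((ad k L a) ^ 2) = ⊥ :=
      Submodule.finrank_eq_zero.mp (Nat.le_zero.mp hr)
    have hA2 : ((ad k L a) ^ 2) = 0 := LinearMap.range_eq_bot.mp hbot
    have hsand : ∀ z : L, ⁅a, ⁅a, z⁆⁆ = 0 := by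
      intro z
      rw [← ad_sq_apply (k := k) a z, hA2]
      rfl
    obtain ⟨x, hx, hxa⟩ := exists_pure_nonorth h2 hgen ha0
    obtain ⟨f, hf⟩ := exists_coeff hx.1
    exact hxa (sandwich_orth hf hsand)
  | succ n ih =>
    intro a ha hr
    by_cases ha0 : a = 0
    · rw [ha0]; exact zero_mem _
    obtain ⟨x, hx, hxa⟩ := exists_pure_nonorth h2 hgen ha0
    obtain ⟨f, hf⟩ := exists_coeff hx.1
    have hfa : f a ≠ 0 := by
      intro h
      exact hxa (by rw [hf a, h, zero_smul])
    have hxxb : ⁅x, ⁅x, ⁅a, ⁅a, x⁆⁆⁆⁆ = (f a * f a) • x := lie_lie_xb hf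
    have hb0 : ⁅a, ⁅a, x⁆⁆ ≠ 0 := by
      intro h
      rw [h, lie_zero, lie_zero] at hxxb
      exact hx.1.1 (by
        have := hxxb.symm
        rcases smul_eq_zero.mp this with h' | h'
        · exact absurd h' (mul_ne_zero hfa hfa)
        · exact h')
    set l : k := (f a)⁻¹ with hl
    set a' : L := a - l • ⁅a, ⁅a, x⁆⁆ with ha'
    have hbx : ⁅⁅a, ⁅a, x⁆⁆, x⁆ = f a • ⁅a, x⁆ := by
      rw [show ⁅⁅a, ⁅a, x⁆⁆, x⁆ = -⁅x, ⁅a, ⁅a, x⁆⁆⁆ from by rw [lie_skew], lie_xb hf, neg_neg]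
    have ha'x : ⁅a', x⁆ = 0 := by
      rw [ha', sub_lie, smul_lie, hbx, smul_smul, hl, inv_mul_cancel₀ hfa, one_smul, sub_self]
    have hxker : ((ad k L a') ^ 2) x = 0 := by
      rw [ad_sq_apply, ha'x, lie_zero]
    have hxnker : ((ad k L a) ^ 2) x ≠ 0 := by
      rw [ad_sq_apply]; exact hb0
    have hkerlt : LinearMap.ker ((ad k L a) ^ 2) < LinearMap.ker ((ad k L a') ^ 2) := by
      refine lt_of_le_of_ne (fun z hz => ?_) (fun h => ?_)
      · have hz' : ((ad k L a) ^ 2) z = 0 := hz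
        exact ad_sub_smul_ker h3k ha x l hz'
      · have hx1 : x ∈ LinearMap.ker ((ad k L a') ^ 2) := hxker
        rw [← h] at hx1
        exact hxnker hx1
    have ha'3 : (ad k L a') ^ 3 = 0 := ad_sub_smul_cube h3k ha x l
    have hranklt : Module.finrank k (LinearMap.range ((ad k L a') ^ 2))
        < Module.finrank k (LinearMap.range ((ad k L a) ^ 2)) := by
      have e1 := LinearMap.finrank_range_add_finrank_ker ((ad k L a) ^ 2)
      have e2 := LinearMap.finrank_range_add_finrank_ker ((ad k L a') ^ 2)
      have e3 := Submodule.finrank_lt_finrank_of_lt hkerlt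
      omega
    have ha'mem : a' ∈ LinearMap.range ((ad k L a') ^ 2) := by
      refine ih a' ha'3 ?_
      omega
    have ha'mem2 : a' ∈ LinearMap.range ((ad k L a) ^ 2) :=
      ad_sub_smul_range h3k ha x l ha'mem
    have hbmem : ⁅a, ⁅a, x⁆⁆ ∈ LinearMap.range ((ad k L a) ^ 2) :=
      ⟨x, ad_sq_apply a x⟩
    have heq : a = a' + l • ⁅a, ⁅a, x⁆⁆ := by rw [ha']; abel
    have hmem : a' + l • ⁅a, ⁅a, x⁆⁆ ∈ LinearMap.range ((ad k L a) ^ 2) :=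
      Submodule.add_mem _ ha'mem2 (Submodule.smul_mem _ _ hbmem)
    rw [← heq] at hmem
    exact hmem

theorem inner_ideal_eq (h2 : (2 : k) ≠ 0) (h3k : (3 : k) ≠ 0)
    (hgen : LieSubalgebra.lieSpan k L {x : L | IsPureExtremal k x} = ⊤)
    (a : L) (ha : (ad k L a) ^ 3 = 0) :
    innerIdealGenerated k a = LinearMap.range ((ad k L a) ^ 2) := by
  apply le_antisymm
  · apply sInf_le
    refine ⟨?_, regular h2 h3k hgen a ha⟩
    intro y hy y' hy' z
    obtain ⟨u, rfl⟩ := hy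
    obtain ⟨v, rfl⟩ := hy'
    rw [ad_sq_apply a u, ad_sq_apply a v]
    exact inner_mem h3k ha u v z
  · apply le_sInf
    rintro J ⟨hJinner, hJa⟩ y ⟨z, rfl⟩
    rw [ad_sq_apply a z]
    exact hJinner a hJa a hJa z

theorem range_spanned (h2 : (2 : k) ≠ 0) (h3k : (3 : k) ≠ 0)
    (hgen : LieSubalgebra.lieSpan k L {x : L | IsPureExtremal k x} = ⊤)
    (a : L) (ha : (ad k L a) ^ 3 = 0) :
    LinearMap.range ((ad k L a) ^ 2)
      = Submodule.span k
          {y : L | IsExtremal k y ∧ y ∈ LinearMap.range ((ad k L a) ^ 2)} := by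
  set S := {y : L | IsExtremal k y ∧ y ∈ LinearMap.range ((ad k L a) ^ 2)} with hS
  apply le_antisymm
  · rintro y ⟨w, rfl⟩
    have hw : w ∈ Submodule.span k {x : L | IsPureExtremal k x} := by
      rw [span_pure_eq_top h2 hgen]; trivial
    have hmem : ((ad k L a) ^ 2) w
        ∈ Submodule.map ((ad k L a) ^ 2) (Submodule.span k {x : L | IsPureExtremal k x}) :=
      ⟨w, hw, rfl⟩
    rw [Submodule.map_span] at hmem
    have hsub : (⇑((ad k L a) ^ 2) '' {x : L | IsPureExtremal k x}) ⊆
        ↑(Submodule.span k S) := by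
      rintro y ⟨p, hp, rfl⟩
      by_cases h0 : ((ad k L a) ^ 2) p = 0
      · rw [h0]; exact Submodule.zero_mem _
      obtain ⟨f, hf⟩ := exists_coeff hp.1
      refine Submodule.subset_span ⟨⟨h0, fun z => ?_⟩, ⟨p, rfl⟩⟩
      have hb : ((ad k L a) ^ 2) p = ⁅a, ⁅a, p⁆⁆ := ad_sq_apply a p
      rw [hb]
      have happ : ⁅⁅a, ⁅a, p⁆⁆, ⁅⁅a, ⁅a, p⁆⁆, z⁆⁆ = ((ad k L ⁅a, ⁅a, p⁆⁆) ^ 2) z :=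
        (ad_sq_apply _ z).symm
      rw [happ, part_two h3k ha p]
      have hcalc : (((ad k L a) ^ 2 * (ad k L p) ^ 2 * (ad k L a) ^ 2)) z
          = ((ad k L a) ^ 2) (((ad k L p) ^ 2) (((ad k L a) ^ 2) z)) := by
        rw [Module.End.mul_apply, Module.End.mul_apply]
      rw [hcalc, ad_sq_apply p, hf, map_smul, ← hb]
      exact Submodule.smul_mem _ _ (Submodule.mem_span_singleton_self _)
    exact Submodule.span_le.mpr hsub hmem
  · rw [Submodule.span_le]
    exact fun y hy => hy.2

end Main

end Stmt5Aux

/-- In characteristic different from `2` and `3`, every ad-nilpotent element `a` of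
index `3` of a finite-dimensional simple Lie algebra generated by its pure extremal
elements satisfies `a ∈ (ad_a)²(L)` and
`(ad_{⁅a,⁅a,x⁆⁆})² = (ad_a)² ∘ (ad_x)² ∘ (ad_a)²` for all `x`; consequently the inner
ideal generated by `a` is spanned by extremal elements. -/
theorem stmt5 {k L : Type*} [Field k] [LieRing L] [LieAlgebra k L]
    [FiniteDimensional k L] [LieAlgebra.IsSimple k L]
    (hchar2 : (2 : k) ≠ 0) (hchar3 : (3 : k) ≠ 0)
    (hgen : LieSubalgebra.lieSpan k L {x : L | IsPureExtremal k x} = ⊤) :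
    ∀ a : L, (LieAlgebra.ad k L a) ^ 3 = 0 → (LieAlgebra.ad k L a) ^ 2 ≠ 0 →
      a ∈ LinearMap.range ((LieAlgebra.ad k L a) ^ 2) ∧
      (∀ x : L, (LieAlgebra.ad k L ⁅a, ⁅a, x⁆⁆) ^ 2 =
        (LieAlgebra.ad k L a) ^ 2 * (LieAlgebra.ad k L x) ^ 2 * (LieAlgebra.ad k L a) ^ 2) ∧
      innerIdealGenerated k a =
        Submodule.span k {x : L | IsExtremal k x ∧ x ∈ innerIdealGenerated k a} := by
  intro a ha _
  refine ⟨Stmt5Aux.regular hchar2 hchar3 hgen a ha,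
    fun x => Stmt5Aux.part_two hchar3 ha x, ?_⟩
  rw [Stmt5Aux.inner_ideal_eq hchar2 hchar3 hgen a ha]
  exact Stmt5Aux.range_spanned hchar2 hchar3 hgen a ha
end

section
/- In the symplectic setting, for every a ∈ V and every X ∈ gl(V)_B one has ⁅D_a, ⁅D_a, X⁆⁆ = 2·B(a, X a)·D_a. In particular, if D_a ≠ 0 then k·D_a is a one-dimensional inner ideal of the Lie algebra gl(V)_B, i.e. D_a is an extremal element of gl(V)_B. -/
/-- The endomorphism `D_{a,b} : v ↦ B(v,b)·a + B(v,a)·b` of the symplectic setting. -/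
def Dpair {k V : Type*} [Field k] [AddCommGroup V] [Module k V]
    (B : LinearMap.BilinForm k V) (a b : V) : Module.End k V :=
  (B.flip b).smulRight a + (B.flip a).smulRight b

/-- The endomorphism `D_a : v ↦ B(v,a)·a` of the symplectic setting. -/
def Dsq {k V : Type*} [Field k] [AddCommGroup V] [Module k V]
    (B : LinearMap.BilinForm k V) (a : V) : Module.End k V :=
  (B.flip a).smulRight a

/-! Since `D_a` has image `k·a`, `D_a X D_a = B(Xa, a)·D_a` for every endomorphism `X`, and
`D_a² = B(a, a)·D_a = 0` for alternating `B`. Expanding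
`⁅D_a, ⁅D_a, X⁆⁆ = D_a² X - 2 D_a X D_a + X D_a²` leaves `-2 B(Xa, a)·D_a = 2 B(a, Xa)·D_a`. -/

theorem lie_lie_self_eq {R : Type*} [Ring R] (x y : R) :
    ⁅x, ⁅x, y⁆⁆ = x * x * y - 2 * (x * y * x) + y * x * x := by
  simp only [Ring.lie_def]
  noncomm_ring

section Dsq

variable {k V : Type*} [Field k] [AddCommGroup V] [Module k V]
  (B : LinearMap.BilinForm k V) (a : V)

@[simp]
theorem Dsq_apply (v : V) : Dsq B a v = B v a • a := rfl

theorem Dsq_mul_mul_Dsq (X : Module.End k V) :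
    Dsq B a * X * Dsq B a = B (X a) a • Dsq B a := by
  ext v
  simp [smul_smul, mul_comm]

theorem Dsq_mul_Dsq : Dsq B a * Dsq B a = B a a • Dsq B a := by
  simpa using Dsq_mul_mul_Dsq B a 1

variable {B} in
theorem lie_Dsq_lie_Dsq (hB : B.IsAlt) (X : Module.End k V) :
    ⁅Dsq B a, ⁅Dsq B a, X⁆⁆ = (2 * B a (X a)) • Dsq B a := by
  have hsq : Dsq B a * Dsq B a = 0 := by
    rw [Dsq_mul_Dsq, hB.self_eq_zero, zero_smul]
  rw [lie_lie_self_eq, mul_assoc (X : Module.End k V), hsq, Dsq_mul_mul_Dsq,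
    ← hB.neg_eq (X a) a, zero_mul, mul_zero, zero_sub, add_zero,
    mul_neg, neg_smul, mul_smul, two_mul, two_smul]

end Dsq

theorem stmt6_general {k V : Type*} [Field k] [AddCommGroup V] [Module k V]
    (B : LinearMap.BilinForm k V) (halt : ∀ v : V, B v v = 0) (a : V) :
    (∀ X : Module.End k V, (∀ u v : V, B u (X v) = B v (X u)) →
      ⁅Dsq B a, ⁅Dsq B a, X⁆⁆ = (2 * B a (X a)) • Dsq B a) ∧
    (Dsq B a ≠ 0 →
      ∀ X : Module.End k V, (∀ u v : V, B u (X v) = B v (X u)) →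
        ⁅Dsq B a, ⁅Dsq B a, X⁆⁆ ∈ Submodule.span k ({Dsq B a} : Set (Module.End k V))) := by
  refine ⟨fun X _ => lie_Dsq_lie_Dsq a halt X, fun _ X _ => ?_⟩
  rw [lie_Dsq_lie_Dsq a halt X]
  exact Submodule.smul_mem _ _ (Submodule.mem_span_singleton_self _)

/-- In the symplectic setting, `⁅D_a, ⁅D_a, X⁆⁆ = 2·B(a, Xa)·D_a` for every
`X ∈ gl(V)_B`; in particular, if `D_a ≠ 0` then `D_a` is an extremal element of
`gl(V)_B`, i.e. `k·D_a` is a one-dimensional inner ideal. -/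
theorem stmt6 {k V : Type*} [Field k] [AddCommGroup V] [Module k V]
    (hchar : (2 : k) ≠ 0)
    (B : LinearMap.BilinForm k V) (halt : ∀ v : V, B v v = 0) (a : V) :
    (∀ X : Module.End k V, (∀ u v : V, B u (X v) = B v (X u)) →
      ⁅Dsq B a, ⁅Dsq B a, X⁆⁆ = (2 * B a (X a)) • Dsq B a) ∧
    (Dsq B a ≠ 0 →
      ∀ X : Module.End k V, (∀ u v : V, B u (X v) = B v (X u)) →
        ⁅Dsq B a, ⁅Dsq B a, X⁆⁆ ∈ Submodule.span k ({Dsq B a} : Set (Module.End k V))) :=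
  stmt6_general B halt a
end

section
/- Let k be a field of characteristic different from 2, V a vector space over k, and B a nondegenerate alternating bilinear form on V. Let X be a linear endomorphism of V with B(u, X v) = B(v, X u) for all u, v ∈ V, and let m ≥ 2 be such that X^m = 0 and X^{m−1} ≠ 0. Then there exists a vector v ∈ V with X^{m−1} v ≠ 0 and B(X v, v) ≠ 0. -/
/-- For a nondegenerate alternating form `B` and a `B`-symmetric endomorphism `X` that
is nilpotent of index `m ≥ 2`, there is a vector `v` generating a Jordan block of size
`m` (i.e. `X^{m-1} v ≠ 0`) with `B(Xv, v) ≠ 0`. -/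
theorem stmt16 {k V : Type*} [Field k] [AddCommGroup V] [Module k V]
    (hchar : (2 : k) ≠ 0)
    (B : LinearMap.BilinForm k V)
    (hnd : ∀ u : V, u ≠ 0 → ∃ w : V, B u w ≠ 0)
    (halt : ∀ v : V, B v v = 0)
    (X : Module.End k V) (hX : ∀ u v : V, B u (X v) = B v (X u))
    (m : ℕ) (hm : 2 ≤ m) (hXm : X ^ m = 0) (hXm1 : X ^ (m - 1) ≠ 0) :
    ∃ v : V, (X ^ (m - 1)) v ≠ 0 ∧ B (X v) v ≠ 0 := by
  have hskew : ∀ u w : V, B u w = - B w u := by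
    intro u w
    have h := halt (u + w)
    simp only [map_add, LinearMap.add_apply, halt, zero_add, add_zero] at h
    linear_combination h
  have hshift : ∀ u w : V, B (X u) w = - B u (X w) := by
    intro u w
    rw [hskew (X u) w, hX w u]
  have hiter : ∀ (n : ℕ) (u w : V), B ((X ^ n) u) w = (-1 : k) ^ n * B u ((X ^ n) w) := by
    intro n
    induction n with
    | zero => intro u w; simp
    | succ n ih =>
      intro u w
      have h1 : (X ^ (n + 1)) u = (X ^ n) (X u) := by
        rw [pow_succ]; rfl
      have h2 : (X ^ (n + 1)) w = X ((X ^ n) w) := by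
        rw [pow_succ']; rfl
      rw [h1, ih, hshift, h2, pow_succ]
      ring
  have hCsymm : ∀ u w : V, B (X u) w = B (X w) u := by
    intro u w
    rw [hshift u w, hshift w u, hX u w]
  have hkey : ∀ v : V, B (X v) v ≠ 0 → X v ≠ 0 := by
    intro v h hz
    rw [hz] at h
    simp at h
  have hexp : ∀ a b : V, B (X (a + b)) (a + b)
      = B (X a) a + B (X a) b + B (X b) a + B (X b) b := by
    intro a b
    simp only [map_add, LinearMap.add_apply]
    ring
  have hexps : ∀ a b : V, B (X (a - b)) (a - b)
      = B (X a) a - B (X a) b - B (X b) a + B (X b) b := by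
    intro a b
    simp only [map_sub, LinearMap.sub_apply]
    ring
  obtain ⟨u, hu⟩ : ∃ u : V, (X ^ (m - 1)) u ≠ 0 := by
    by_contra h
    push_neg at h
    exact hXm1 (LinearMap.ext fun v => by simpa using h v)
  rcases eq_or_ne (B (X u) u) 0 with h0 | h0
  · obtain ⟨w, hw⟩ := hnd ((X ^ (m - 1)) u) hu
    rcases eq_or_lt_of_le hm with hm2 | hm3
    · -- m = 2
      subst hm2
      simp only [show (2 : ℕ) - 1 = 1 from rfl, pow_one] at hu hw ⊢
      by_cases h1 : B (X (u + w)) (u + w) = 0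
      · have hval : B (X (u - w)) (u - w) ≠ 0 := by
          intro hz
          apply hw
          rw [hexp] at h1
          rw [hexps] at hz
          have h4 : (2 : k) * ((2 : k) * B (X u) w) = 0 := by
            linear_combination h1 - hz + 2 * hCsymm u w
          simp [mul_eq_zero, hchar] at h4
          exact h4
        exact ⟨u - w, hkey _ hval, hval⟩
      · exact ⟨u + w, hkey _ h1, h1⟩
    · -- m ≥ 3
      have hz1 : (X ^ (m - 1)) ((X ^ (m - 2)) w) = 0 := by
        have h1 : X ^ (m - 1) * X ^ (m - 2) = X ^ (m - 3) * X ^ m := by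
          rw [← pow_add, ← pow_add]; congr 1; omega
        have h2 : (X ^ (m - 1)) ((X ^ (m - 2)) w) = (X ^ (m - 1) * X ^ (m - 2)) w := rfl
        rw [h2, h1, hXm, mul_zero, LinearMap.zero_apply]
      have hXa : X ((X ^ (m - 2)) w) = (X ^ (m - 1)) w := by
        have h1 : X * X ^ (m - 2) = X ^ (m - 1) := by
          rw [← pow_succ']; congr 1; omega
        calc X ((X ^ (m - 2)) w) = (X * X ^ (m - 2)) w := rfl
          _ = (X ^ (m - 1)) w := by rw [h1]
      have hε : (-1 : k) ^ (m - 1) * (-1 : k) ^ (m - 1) = 1 := by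
        rw [← pow_add]; exact Even.neg_one_pow ⟨m - 1, rfl⟩
      have t2 : B (X u) ((X ^ (m - 2)) w)
          = -((-1 : k) ^ (m - 1) * B ((X ^ (m - 1)) u) w) := by
        rw [hshift, hXa]
        have h := hiter (m - 1) u w
        linear_combination (-1 : k) ^ (m - 1) * h + B u ((X ^ (m - 1)) w) * hε
      have t3 : B (X ((X ^ (m - 2)) w)) u
          = -((-1 : k) ^ (m - 1) * B ((X ^ (m - 1)) u) w) := by
        rw [hXa, hiter (m - 1) w u, hskew w ((X ^ (m - 1)) u)]
        ring
      have t4 : B (X ((X ^ (m - 2)) w)) ((X ^ (m - 2)) w) = 0 := by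
        rw [hXa, hiter (m - 1) w, hz1, map_zero, mul_zero]
      refine ⟨u + (X ^ (m - 2)) w, ?_, ?_⟩
      · rw [map_add, hz1, add_zero]; exact hu
      · rw [hexp, h0, t2, t3, t4]
        have h5 : (0 : k) + -((-1 : k) ^ (m - 1) * B ((X ^ (m - 1)) u) w)
            + -((-1 : k) ^ (m - 1) * B ((X ^ (m - 1)) u) w) + 0
            = -(2 * ((-1 : k) ^ (m - 1) * B ((X ^ (m - 1)) u) w)) := by ring
        rw [h5]
        refine neg_ne_zero.2 (mul_ne_zero hchar (mul_ne_zero ?_ hw))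
        exact pow_ne_zero _ (neg_ne_zero.2 one_ne_zero)
  · exact ⟨u, hu, h0⟩
end

section
/- Let k be a separably closed field of characteristic different from 2, V a finite-dimensional vector space over k, and B a nondegenerate symmetric bilinear form on V. Let X be a nonzero linear endomorphism of V with B(X u, v) = −B(u, X v) for all u, v ∈ V and with X ∘ X = 0. Then there exists a vector v ∈ V such that X v ≠ 0 and B(v, v) = 0; for such v one automatically also has B(v, X v) = 0 and B(X v, X v) = 0, so the span of v and X v is a 2-dimensional totally singular subspace of V invariant under X. -/
/-!
Skewness of `X` with respect to the symmetric form `B` gives `B(w, Xw) = 0`, and `X² = 0`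
gives `B(Xa, Xb) = -B(a, X²b) = 0`; so for any `v` the plane spanned by `v` and `Xv` is
totally singular as soon as `B(v, v) = 0`. To make `v` isotropic, start from any `u` with
`Xu ≠ 0` and correct it by a vector of `im X`, which does not change `Xu`: by nondegeneracy
there is `z` with `c = B(Xu, z) ≠ 0`, and `B(u + s Xz, u + s Xz) = B(u, u) - 2sc`, which
vanishes for `s = B(u, u) / 2c`.
-/

open Submodule

section CommRing

variable {R M : Type*} [CommRing R] [AddCommGroup M] [Module R M]

theorem LinearMap.BilinForm.apply_eq_zero_of_mem_span (B : LinearMap.BilinForm R M) {s : Set M}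
    (h : ∀ x ∈ s, ∀ y ∈ s, B x y = 0) :
    ∀ x ∈ span R s, ∀ y ∈ span R s, B x y = 0 := by
  intro x hx y hy
  have hs : ∀ y ∈ s, B x y = 0 := fun y hy' =>
    LinearMap.eqOn_span (f := B.flip y) (g := 0) (fun x' hx' => h x' hx' y hy') hx
  exact LinearMap.eqOn_span (f := B x) (g := 0) hs hy

theorem LinearMap.BilinForm.apply_apply_eq_zero_of_skew_of_sq_eq_zero
    (B : LinearMap.BilinForm R M) {X : Module.End R M}
    (hskew : ∀ u v, B (X u) v = -B u (X v)) (hsq : ∀ w, X (X w) = 0) (a b : M) :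
    B (X a) (X b) = 0 := by
  rw [hskew, hsq, map_zero, neg_zero]

theorem Module.End.span_pair_le_comap_of_sq_eq_zero {X : Module.End R M}
    (hsq : ∀ w, X (X w) = 0) (v : M) :
    span R {v, X v} ≤ (span R {v, X v}).comap X := by
  rw [span_le, Set.insert_subset_iff, Set.singleton_subset_iff]
  exact ⟨subset_span (by simp), by simp [hsq]⟩

end CommRing

section Field

variable {k V : Type*} [Field k] [AddCommGroup V] [Module k V]

theorem LinearMap.BilinForm.apply_self_apply_eq_zero_of_skew (hchar : (2 : k) ≠ 0)
    (B : LinearMap.BilinForm k V) (hsymm : ∀ u v, B u v = B v u) {X : Module.End k V}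
    (hskew : ∀ u v, B (X u) v = -B u (X v)) (w : V) :
    B w (X w) = 0 := by
  have h : (2 : k) * B w (X w) = 0 := by linear_combination hskew w w - hsymm (X w) w
  exact (mul_eq_zero.mp h).resolve_left hchar

theorem Module.End.finrank_span_pair_eq_two {X : Module.End k V} {v : V}
    (hXv : X v ≠ 0) (hXXv : X (X v) = 0) :
    Module.finrank k (span k ({v, X v} : Set V)) = 2 := by
  have hli : LinearIndependent k ![v, X v] := by
    rw [LinearIndependent.pair_iff]
    intro a b hab
    have ha : a = 0 := by
      simpa [hXXv, hXv] using congrArg X hab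
    subst ha
    simpa [hXv] using hab
  have := finrank_span_eq_card hli
  rwa [Matrix.range_cons_cons_empty] at this

theorem LinearMap.BilinForm.exists_apply_eq_and_isotropic (hchar : (2 : k) ≠ 0)
    (B : LinearMap.BilinForm k V) (hsymm : ∀ u v, B u v = B v u) {X : Module.End k V}
    (hskew : ∀ u v, B (X u) v = -B u (X v)) (hsq : ∀ w, X (X w) = 0)
    {u z : V} (hz : B (X u) z ≠ 0) :
    ∃ v, X v = X u ∧ B v v = 0 := by
  refine ⟨u + (B u u / (2 * B (X u) z)) • X z, by simp [hsq], ?_⟩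
  have huXz : B u (X z) = -B (X u) z := by rw [hskew u z, neg_neg]
  have hXzu : B (X z) u = -B (X u) z := by rw [hsymm, huXz]
  simp only [map_add, map_smul, LinearMap.add_apply, LinearMap.smul_apply, smul_eq_mul,
    huXz, hXzu, B.apply_apply_eq_zero_of_skew_of_sq_eq_zero hskew hsq]
  field_simp
  ring

end Field

theorem stmt17_general {k V : Type*} [Field k] [AddCommGroup V] [Module k V]
    (hchar : (2 : k) ≠ 0)
    (B : LinearMap.BilinForm k V)
    (hnd : ∀ u : V, u ≠ 0 → ∃ w : V, B u w ≠ 0)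
    (hsymm : ∀ u v : V, B u v = B v u)
    (X : Module.End k V) (hX0 : X ≠ 0)
    (hskew : ∀ u v : V, B (X u) v = -B u (X v))
    (hsq : X * X = 0) :
    ∃ v : V, X v ≠ 0 ∧ B v v = 0 ∧ B v (X v) = 0 ∧ B (X v) (X v) = 0 ∧
      Module.finrank k (Submodule.span k ({v, X v} : Set V)) = 2 ∧
      (∀ w ∈ Submodule.span k ({v, X v} : Set V),
        ∀ w' ∈ Submodule.span k ({v, X v} : Set V), B w w' = 0) ∧
      (∀ w ∈ Submodule.span k ({v, X v} : Set V),
        X w ∈ Submodule.span k ({v, X v} : Set V)) := by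
  have hXX : ∀ w, X (X w) = 0 := fun w => LinearMap.congr_fun hsq w
  obtain ⟨u, hu⟩ : ∃ u, X u ≠ 0 := by
    by_contra! h
    exact hX0 (LinearMap.ext h)
  obtain ⟨z, hz⟩ := hnd (X u) hu
  obtain ⟨v, hXv, hvv⟩ := B.exists_apply_eq_and_isotropic hchar hsymm hskew hXX hz
  have hvXv := B.apply_self_apply_eq_zero_of_skew hchar hsymm hskew v
  have hXvXv := B.apply_apply_eq_zero_of_skew_of_sq_eq_zero hskew hXX v v
  rw [← hXv] at hu
  refine ⟨v, hu, hvv, hvXv, hXvXv, Module.End.finrank_span_pair_eq_two hu (hXX v), ?_,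
    fun w hw => Module.End.span_pair_le_comap_of_sq_eq_zero hXX v hw⟩
  refine B.apply_eq_zero_of_mem_span ?_
  simp only [Set.forall_mem_insert, Set.mem_singleton_iff, forall_eq]
  exact ⟨⟨hvv, hvXv⟩, hsymm (X v) v ▸ hvXv, hXvXv⟩

/-- Over a separably closed field of characteristic `≠ 2`, a nonzero `B`-skew
endomorphism `X` with `X² = 0` (for `B` a nondegenerate symmetric bilinear form on a
finite-dimensional space) admits a vector `v` with `Xv ≠ 0` and `B(v,v) = 0`; then also
`B(v,Xv) = 0` and `B(Xv,Xv) = 0`, so the span of `v` and `Xv` is a `2`-dimensional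
totally singular subspace invariant under `X`. -/
theorem stmt17 {k V : Type*} [Field k] [IsSepClosed k] [AddCommGroup V] [Module k V]
    [FiniteDimensional k V]
    (hchar : (2 : k) ≠ 0)
    (B : LinearMap.BilinForm k V)
    (hnd : ∀ u : V, u ≠ 0 → ∃ w : V, B u w ≠ 0)
    (hsymm : ∀ u v : V, B u v = B v u)
    (X : Module.End k V) (hX0 : X ≠ 0)
    (hskew : ∀ u v : V, B (X u) v = -B u (X v))
    (hsq : X * X = 0) :
    ∃ v : V, X v ≠ 0 ∧ B v v = 0 ∧ B v (X v) = 0 ∧ B (X v) (X v) = 0 ∧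
      Module.finrank k (Submodule.span k ({v, X v} : Set V)) = 2 ∧
      (∀ w ∈ Submodule.span k ({v, X v} : Set V),
        ∀ w' ∈ Submodule.span k ({v, X v} : Set V), B w w' = 0) ∧
      (∀ w ∈ Submodule.span k ({v, X v} : Set V),
        X w ∈ Submodule.span k ({v, X v} : Set V)) :=
  stmt17_general hchar B hnd hsymm X hX0 hskew hsq
end

section
/- Let k be a field of characteristic 3 and let V be a 3-dimensional vector space over k. Let X be a linear endomorphism of V with X³ = 0 and X² ≠ 0. Then for every linear endomorphism A of V with trace zero, the element ⁅X, ⁅X, A⁆⁆ = X∘X∘A − 2·X∘A∘X + A∘X∘X lies in the 2-dimensional subspace of gl(V) spanned by X and the identity map; in other words, the image of X in the quotient of sl(V) by its center is an extremal element of that Lie algebra. -/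
private lemma key_matrix {k : Type*} [Field k] [CharP k 3]
    (P : Matrix (Fin 3) (Fin 3) k) (hP : Matrix.trace P = 0) :
    (Matrix.of ![![0,1,0],![0,0,1],![0,0,0]]) * (Matrix.of ![![0,1,0],![0,0,1],![0,0,0]]) * P
      - (2 : k) • ((Matrix.of ![![0,1,0],![0,0,1],![0,0,0]]) * P * (Matrix.of ![![0,1,0],![0,0,1],![0,0,0]]))
      + P * (Matrix.of ![![0,1,0],![0,0,1],![0,0,0]]) * (Matrix.of ![![0,1,0],![0,0,1],![0,0,0]])
    = (P 1 0 + P 2 1) • (Matrix.of ![![0,1,0],![0,0,1],![0,0,0]]) + (P 2 0) • (1 : Matrix (Fin 3) (Fin 3) k) := by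
  have h3 : (3 : k) = 0 := CharP.cast_eq_zero k 3
  have h2 : (2 : k) = -1 := by linear_combination h3
  rw [h2]
  rw [Matrix.trace_fin_three] at hP
  rw [Matrix.eta_fin_three P]
  generalize P 0 0 = a at hP ⊢
  generalize P 0 1 = b at hP ⊢
  generalize P 0 2 = c at hP ⊢
  generalize P 1 0 = d at hP ⊢
  generalize P 1 1 = e at hP ⊢
  generalize P 1 2 = f at hP ⊢
  generalize P 2 0 = g at hP ⊢
  generalize P 2 1 = h at hP ⊢
  generalize P 2 2 = i at hP ⊢
  ext x y
  fin_cases x <;> fin_cases y <;>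
    simp [Matrix.mul_apply, Fin.sum_univ_three, Matrix.one_apply] <;>
    (try simp only [Matrix.vecHead, Matrix.vecTail, Function.comp]) <;>
    first
      | ring1
      | linear_combination 2 * hP
      | linear_combination -hP
      | linear_combination hP

/-- In characteristic `3`, for a nilpotent endomorphism `X` of a `3`-dimensional space
with `X³ = 0` and `X² ≠ 0`, and any trace-zero endomorphism `A`, the double bracket
`⁅X, ⁅X, A⁆⁆ = X∘X∘A − 2·X∘A∘X + A∘X∘X` lies in the `2`-dimensional subspace of
`gl(V)` spanned by `X` and the identity; i.e. the image of `X` in `sl(V)` modulo its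
center is extremal. -/
theorem stmt18 {k V : Type*} [Field k] [CharP k 3] [AddCommGroup V] [Module k V]
    [FiniteDimensional k V] (hdim : Module.finrank k V = 3)
    (X : Module.End k V) (hX3 : X ^ 3 = 0) (hX2 : X ^ 2 ≠ 0) :
    ∀ A : Module.End k V, LinearMap.trace k V A = 0 →
      ⁅X, ⁅X, A⁆⁆ = X * X * A - (2 : k) • (X * A * X) + A * X * X ∧
      Module.finrank k (Submodule.span k ({X, 1} : Set (Module.End k V))) = 2 ∧
      ⁅X, ⁅X, A⁆⁆ ∈ Submodule.span k ({X, 1} : Set (Module.End k V)) := by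
  intro A hA
  have hX0 : X ≠ 0 := by
    rintro rfl; exact hX2 (by simp [pow_two])
  have h1 : ⁅X, ⁅X, A⁆⁆ = X * X * A - (2 : k) • (X * A * X) + A * X * X := by
    rw [two_smul]
    simp only [Ring.lie_def]
    noncomm_ring
  -- linear independence of X and 1
  have hli : LinearIndependent k ![X, (1 : Module.End k V)] := by
    rw [LinearIndependent.pair_iff]
    intro s t hst
    have h2 : (s • X + t • (1 : Module.End k V)) * X ^ 2 = 0 := by rw [hst]; simp
    have h2' : t • X ^ 2 = 0 := by
      have : s • (X * X ^ 2) + t • X ^ 2 = 0 := by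
        simpa [add_mul, smul_mul_assoc] using h2
      rwa [(pow_succ' X 2).symm, hX3, smul_zero, zero_add] at this
    have ht : t = 0 := by
      rcases smul_eq_zero.mp h2' with h | h
      · exact h
      · exact absurd h hX2
    subst ht
    have hs : s = 0 := by
      rcases (by simpa using hst : s = 0 ∨ X = 0) with h | h
      · exact h
      · exact absurd h hX0
    exact ⟨hs, rfl⟩
  have hrange : ({X, 1} : Set (Module.End k V)) = Set.range ![X, 1] := by
    ext y; simp [Fin.exists_fin_two, or_comm]
  have hfr : Module.finrank k (Submodule.span k ({X, 1} : Set (Module.End k V))) = 2 := by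
    rw [hrange, finrank_span_eq_card hli]; simp
  -- choose v with X² v ≠ 0
  obtain ⟨v, hv⟩ : ∃ v, (X ^ 2) v ≠ 0 := by
    by_contra h
    push_neg at h
    exact hX2 (LinearMap.ext h)
  -- the basis
  set w : Fin 3 → V := ![(X ^ 2) v, X v, v] with hw
  have hX4 : X * X ^ 2 = 0 := by rw [← pow_succ', hX3]
  have hXX : X * X = X ^ 2 := (sq X).symm
  have h22 : X ^ 2 * X ^ 2 = 0 := by
    rw [← pow_add]
    rw [show (2 + 2 : ℕ) = 3 + 1 from rfl, pow_succ, hX3, zero_mul]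
  have h21 : X ^ 2 * X = 0 := by rw [← pow_succ, hX3]
  have hliw : LinearIndependent k w := by
    rw [Fintype.linearIndependent_iff]
    intro g hg
    rw [Fin.sum_univ_three] at hg
    simp only [hw, Matrix.cons_val_zero, Matrix.cons_val_one, Matrix.head_cons,
      Matrix.cons_val_two, Matrix.tail_cons] at hg
    have e2 : g 2 • (X ^ 2) v = 0 := by
      have := congrArg (⇑(X ^ 2)) hg
      simpa [map_add, map_smul, ← Module.End.mul_apply, h22, h21] using this
    have hg2 : g 2 = 0 := by
      rcases smul_eq_zero.mp e2 with h | h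
      · exact h
      · exact absurd h hv
    have e1 : g 1 • (X ^ 2) v = 0 := by
      have := congrArg (⇑X) hg
      simpa [map_add, map_smul, ← Module.End.mul_apply, hX4, hXX, hg2] using this
    have hg1 : g 1 = 0 := by
      rcases smul_eq_zero.mp e1 with h | h
      · exact h
      · exact absurd h hv
    have hg0 : g 0 = 0 := by
      rw [hg1, hg2] at hg
      simp only [zero_smul, add_zero] at hg
      rcases smul_eq_zero.mp hg with h | h
      · exact h
      · exact absurd h hv
    intro i; fin_cases i <;> assumption
  have hcard : Fintype.card (Fin 3) = Module.finrank k V := by simp [hdim]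
  let b : Module.Basis (Fin 3) k V := basisOfLinearIndependentOfCardEqFinrank hliw hcard
  have hb : ⇑b = w := coe_basisOfLinearIndependentOfCardEqFinrank hliw hcard
  -- matrix of X
  have hb0 : b 0 = (X ^ 2) v := by rw [hb]; simp [hw]
  have hb1 : b 1 = X v := by rw [hb]; simp [hw]
  have hb2 : b 2 = v := by rw [hb]; simp [hw]
  have e0 : X (b 0) = 0 := by
    rw [hb0, ← Module.End.mul_apply, hX4]; simp
  have e1 : X (b 1) = b 0 := by rw [hb1, hb0, ← Module.End.mul_apply, hXX]
  have e2 : X (b 2) = b 1 := by rw [hb2, hb1]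
  have hM : LinearMap.toMatrix b b X = Matrix.of ![![0,1,0],![0,0,1],![0,0,0]] := by
    ext i j
    rw [LinearMap.toMatrix_apply]
    fin_cases j <;> fin_cases i <;>
      simp [e0, e1, e2, Module.Basis.repr_self, Finsupp.single_apply, Matrix.vecHead, Matrix.vecTail]
  set P : Matrix (Fin 3) (Fin 3) k := LinearMap.toMatrix b b A with hPdef
  have hPtr : Matrix.trace P = 0 := by
    rw [hPdef, ← LinearMap.trace_eq_matrix_trace k b A, hA]
  -- the final identity
  have hfin : ⁅X, ⁅X, A⁆⁆ = (P 1 0 + P 2 1) • X + (P 2 0) • (1 : Module.End k V) := by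
    apply (LinearMap.toMatrix b b).injective
    rw [h1]
    simp only [map_add, map_sub, map_smul, LinearMap.toMatrix_mul, LinearMap.toMatrix_one, hM,
      ← hPdef]
    exact key_matrix P hPtr
  refine ⟨h1, hfr, ?_⟩
  rw [hfin]
  exact Submodule.add_mem _
    (Submodule.smul_mem _ _ (Submodule.subset_span (by simp)))
    (Submodule.smul_mem _ _ (Submodule.subset_span (by simp)))
end
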